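/- arXiv:2102.05453 — 6 statements merged into one kernel-verified Lean document; each statement's English description precedes it below -/
import Mathlib

section
/- Let E_n, for n ≥ 0, be a sequence of nonempty compact sets in ℂ and let f : ℂ → ℂ be a continuous function such that E_{n+1} ⊆ f(E_n) for all n ≥ 0. Then there exists a point ζ ∈ E_0 such that f^n(ζ) ∈ E_n for all n ≥ 0. -/
/-- **Lemma (Rippon–Stallard).** If `E n` is a sequence of nonempty compact subsets of `ℂ`,
`f : ℂ → ℂ` is continuous, and `E (n+1) ⊆ f '' (E n)` for all `n`, then there is a point
`ζ ∈ E 0` with `f^[n] ζ ∈ E n` for all `n ≥ 0`. -/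
theorem exists_orbit_in_compact_sets (E : ℕ → Set ℂ) (f : ℂ → ℂ)
    (hcomp : ∀ n, IsCompact (E n)) (hne : ∀ n, (E n).Nonempty)
    (hf : Continuous f) (hsub : ∀ n, E (n + 1) ⊆ f '' (E n)) :
    ∃ ζ ∈ E 0, ∀ n : ℕ, f^[n] ζ ∈ E n := by
  -- nested closed sets
  set S : ℕ → Set ℂ := fun n => ⋂ k ≤ n, f^[k] ⁻¹' E k with hS
  have hSmem : ∀ n z, z ∈ S n ↔ ∀ k ≤ n, f^[k] z ∈ E k := by
    intro n z
    simp [hS]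
  -- nonemptiness: pull back along `hsub`
  have key : ∀ n m : ℕ, ∃ z ∈ E m, ∀ k ≤ n, f^[k] z ∈ E (m + k) := by
    intro n
    induction n with
    | zero =>
      intro m
      obtain ⟨z, hz⟩ := hne m
      exact ⟨z, hz, fun k hk => by interval_cases k; simpa using hz⟩
    | succ n ih =>
      intro m
      obtain ⟨z, hz, hz'⟩ := ih (m + 1)
      obtain ⟨w, hw, hwz⟩ := hsub m hz
      refine ⟨w, hw, fun k hk => ?_⟩
      match k with
      | 0 => simpa using hw
      | j + 1 =>
        have : f^[j + 1] w = f^[j] z := by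
          rw [Function.iterate_succ_apply, hwz]
        rw [this]
        have := hz' j (by omega)
        convert this using 2
        omega
  have hSne : ∀ n, (S n).Nonempty := by
    intro n
    obtain ⟨z, hz, hz'⟩ := key n 0
    exact ⟨z, (hSmem n z).2 fun k hk => by simpa using hz' k hk⟩
  have hSclosed : ∀ n, IsClosed (S n) := by
    intro n
    exact isClosed_biInter fun k _ => (hcomp k).isClosed.preimage (hf.iterate k)
  have hSanti : ∀ n, S (n + 1) ⊆ S n := by
    intro n z hz
    rw [hSmem] at hz ⊢
    exact fun k hk => hz k (by omega)
  have hS0 : IsCompact (S 0) := by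
    apply (hcomp 0).of_isClosed_subset (hSclosed 0)
    intro z hz
    simpa using (hSmem 0 z).1 hz 0 le_rfl
  have hScomp : ∀ n, IsCompact (S n) := by
    intro n
    apply hS0.of_isClosed_subset (hSclosed n)
    induction n with
    | zero => exact subset_rfl
    | succ n ih => exact (hSanti n).trans ih
  obtain ⟨z, hz⟩ := IsCompact.nonempty_iInter_of_sequence_nonempty_isCompact_isClosed
    S hSanti hSne hS0 hSclosed
  refine ⟨z, ?_, fun n => ?_⟩
  · simpa using (hSmem 0 z).1 (Set.mem_iInter.1 hz 0) 0 le_rfl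
  · exact (hSmem n z).1 (Set.mem_iInter.1 hz n) n le_rfl
end

section
/- Let A = A(r,R) with 0 < r < R and let z₁, z₂ ∈ A with |z₂| ≤ |z₁|. Then the hyperbolic distance satisfies d_A(z₁,z₂) ≥ max{ (π/mod(A)) · log(|z₁|/|z₂|), log( log(R/|z₂|) / log(R/|z₁|) ) }, where mod(A) = log(R/r). -/
open Real Complex

/-- The round annulus `A(r,R) = {z : r < |z| < R}`. -/
def annulus (r R : ℝ) : Set ℂ := {z : ℂ | r < ‖z‖ ∧ ‖z‖ < R}

/-- The hyperbolic density (curvature `−1`) of the annulus `A(r,R)`. -/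
noncomputable def annulusHypDensity (r R : ℝ) (z : ℂ) : ℝ :=
  π / (‖z‖ * Real.log (R / r) *
    Real.sin (π * Real.log (R / ‖z‖) / Real.log (R / r)))

/-- The hyperbolic distance on the annulus `A(r,R)`: the infimum of the hyperbolic
lengths `∫ λ_A(γ(t)) |γ'(t)| dt` over piecewise smooth (here: `C¹`) paths `γ` in
the annulus joining `z₁` to `z₂`. -/
noncomputable def annulusHypDist (r R : ℝ) (z₁ z₂ : ℂ) : ℝ :=
  sInf { L : ℝ | ∃ γ : ℝ → ℂ, γ 0 = z₁ ∧ γ 1 = z₂ ∧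
    (∀ t ∈ Set.Icc (0:ℝ) 1, γ t ∈ annulus r R) ∧ ContDiffOn ℝ 1 γ (Set.Icc (0:ℝ) 1) ∧
    L = ∫ t in (0:ℝ)..1, annulusHypDensity r R (γ t) * ‖deriv γ t‖ }

/-!
Along a `C¹` path `γ` in the annulus, a radial potential `f(|z|)` with `|f'(|z|)| ≤ λ_A(z)`
changes by at most the hyperbolic length of `γ`: differentiate `f(|γ t|)` and use
`|d|γ t|/dt| ≤ |γ'(t)|`. The two bounds come from the potentials `(π / mod A) log s` and
`log log (R / s)`, which are admissible because `sin x ≤ 1` and `sin x ≤ x` in the density.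
-/

open Set MeasureTheory

section PathLength

variable {E : Type*} [NormedAddCommGroup E] [NormedSpace ℝ E]

theorem abs_sub_le_integral_of_norm_hasFDerivAt_le {G : E → ℝ} {G' : E → E →L[ℝ] ℝ}
    {ρ : E → ℝ} {U : Set E} {γ : ℝ → E} {a b : ℝ} (hab : a ≤ b)
    (hG : ∀ z ∈ U, HasFDerivAt G (G' z) z) (hG' : ∀ z ∈ U, ‖G' z‖ ≤ ρ z)
    (hγU : MapsTo γ (Icc a b) U) (hγc : ContinuousOn γ (Icc a b))
    (hγd : ∀ t ∈ Ioo a b, DifferentiableAt ℝ γ t)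
    (hint : IntegrableOn (fun t => ρ (γ t) * ‖deriv γ t‖) (Icc a b)) :
    |G (γ b) - G (γ a)| ≤ ∫ t in a..b, ρ (γ t) * ‖deriv γ t‖ := by
  have hcont : ContinuousOn (G ∘ γ) (Icc a b) := fun t ht =>
    (hG _ (hγU ht)).continuousAt.comp_continuousWithinAt (hγc t ht)
  have hderiv : ∀ t ∈ Ioo a b, HasDerivAt (G ∘ γ) (G' (γ t) (deriv γ t)) t := fun t ht =>
    (hG _ (hγU (Ioo_subset_Icc_self ht))).comp_hasDerivAt t (hγd t ht).hasDerivAt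
  have hbound : ∀ t ∈ Ioo a b, |G' (γ t) (deriv γ t)| ≤ ρ (γ t) * ‖deriv γ t‖ := fun t ht =>
    ((G' (γ t)).le_opNorm _).trans <|
      mul_le_mul_of_nonneg_right (hG' _ (hγU (Ioo_subset_Icc_self ht))) (norm_nonneg _)
  rw [abs_sub_le_iff]
  constructor
  · exact intervalIntegral.sub_le_integral_of_hasDeriv_right_of_le hab hcont
      (fun t ht => (hderiv t ht).hasDerivWithinAt) hint
      fun t ht => (le_abs_self _).trans (hbound t ht)
  · have := intervalIntegral.sub_le_integral_of_hasDeriv_right_of_le hab hcont.neg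
      (fun t ht => (hderiv t ht).neg.hasDerivWithinAt) hint
      fun t ht => (neg_le_abs _).trans (hbound t ht)
    simpa [neg_add_eq_sub] using this

theorem ContDiffOn.integrableOn_comp_mul_norm_deriv {γ : ℝ → E} {ρ : E → ℝ} {U : Set E}
    {a b : ℝ} (hab : a < b) (hγ : ContDiffOn ℝ 1 γ (Icc a b)) (hγU : MapsTo γ (Icc a b) U)
    (hρ : ContinuousOn ρ U) :
    IntegrableOn (fun t => ρ (γ t) * ‖deriv γ t‖) (Icc a b) := by
  have hcont : ContinuousOn (fun t => ρ (γ t) * ‖derivWithin γ (Icc a b) t‖) (Icc a b) :=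
    (hρ.comp hγ.continuousOn hγU).mul
      (hγ.continuousOn_derivWithin (uniqueDiffOn_Icc hab) le_rfl).norm
  rw [integrableOn_Icc_iff_integrableOn_Ioo]
  refine (hcont.integrableOn_Icc.mono_set Ioo_subset_Icc_self).congr_fun (fun t ht => ?_)
    measurableSet_Ioo
  simp only [derivWithin_of_mem_nhds (Icc_mem_nhds ht.1 ht.2)]

end PathLength

section Annulus

variable {r R : ℝ} {z z₁ z₂ : ℂ}

theorem exists_contDiff_path_annulus (hz₁ : z₁ ∈ annulus r R) (hz₂ : z₂ ∈ annulus r R) :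
    ∃ γ : ℝ → ℂ, γ 0 = z₁ ∧ γ 1 = z₂ ∧ MapsTo γ (Icc 0 1) (annulus r R) ∧ ContDiff ℝ 1 γ := by
  set ρ : ℝ → ℝ := fun t => (1 - t) * ‖z₁‖ + t * ‖z₂‖
  set θ : ℝ → ℝ := fun t => (1 - t) * arg z₁ + t * arg z₂
  have hofReal : ContDiff ℝ 1 ((↑) : ℝ → ℂ) := ofRealCLM.contDiff
  refine ⟨fun t => ρ t * exp (θ t * I), ?_, ?_, fun t ht => ?_, by fun_prop⟩
  · simp [ρ, θ]
  · simp [ρ, θ]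
  · have hρ : ρ t ∈ Ioo r R ∩ Ici 0 := (convex_Ioo r R).inter (convex_Ici 0)
      ⟨hz₁, norm_nonneg _⟩ ⟨hz₂, norm_nonneg _⟩ (sub_nonneg.2 ht.2) ht.1 (by ring)
    simpa [annulus, norm_exp_ofReal_mul_I, abs_of_nonneg (a := ρ t) hρ.2] using hρ.1

theorem log_div_pos_of_mem_annulus (hr : 0 < r) (hz : z ∈ annulus r R) : 0 < Real.log (R / r) :=
  log_pos ((one_lt_div hr).2 (hz.1.trans hz.2))

theorem log_div_norm_pos_of_mem_annulus (hr : 0 < r) (hz : z ∈ annulus r R) :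
    0 < Real.log (R / ‖z‖) :=
  log_pos ((one_lt_div (hr.trans hz.1)).2 hz.2)

theorem sin_pos_of_mem_annulus (hr : 0 < r) (hz : z ∈ annulus r R) :
    0 < Real.sin (π * Real.log (R / ‖z‖) / Real.log (R / r)) := by
  have hM := log_div_pos_of_mem_annulus hr hz
  have hL : Real.log (R / ‖z‖) < Real.log (R / r) :=
    log_lt_log (div_pos (hr.trans (hz.1.trans hz.2)) (hr.trans hz.1))
      (div_lt_div_of_pos_left (hr.trans (hz.1.trans hz.2)) hr hz.1)
  apply sin_pos_of_pos_of_lt_pi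
  · have := log_div_norm_pos_of_mem_annulus hr hz
    positivity
  · rw [div_lt_iff₀ hM]
    exact mul_lt_mul_of_pos_left hL pi_pos

theorem continuousOn_annulusHypDensity (hr : 0 < r) :
    ContinuousOn (annulusHypDensity r R) (annulus r R) := by
  intro z hz
  have h₁ : 0 < ‖z‖ := hr.trans hz.1
  have h₂ : 0 < R / ‖z‖ := div_pos (h₁.trans hz.2) h₁
  have h₃ := log_div_pos_of_mem_annulus hr hz
  have h₄ := (mul_pos (mul_pos h₁ h₃) (sin_pos_of_mem_annulus hr hz)).ne'
  refine ContinuousAt.continuousWithinAt ?_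
  unfold annulusHypDensity
  fun_prop (disch := first | exact h₄ | exact h₃.ne' | exact h₂.ne' | exact h₁.ne')

theorem div_norm_mul_log_le_annulusHypDensity (hr : 0 < r) (hz : z ∈ annulus r R) :
    π / (‖z‖ * Real.log (R / r)) ≤ annulusHypDensity r R z := by
  have h₁ : 0 < ‖z‖ := hr.trans hz.1
  have h₂ := log_div_pos_of_mem_annulus hr hz
  have h₃ := sin_pos_of_mem_annulus hr hz
  exact div_le_div_of_nonneg_left pi_pos.le (by positivity)
    (mul_le_of_le_one_right (by positivity) (sin_le_one _))

theorem one_div_norm_mul_log_le_annulusHypDensity (hr : 0 < r) (hz : z ∈ annulus r R) :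
    1 / (‖z‖ * Real.log (R / ‖z‖)) ≤ annulusHypDensity r R z := by
  have h₁ : 0 < ‖z‖ := hr.trans hz.1
  have h₂ := log_div_pos_of_mem_annulus hr hz
  have h₃ := log_div_norm_pos_of_mem_annulus hr hz
  have h₄ := sin_pos_of_mem_annulus hr hz
  calc 1 / (‖z‖ * Real.log (R / ‖z‖))
      = π / (‖z‖ * Real.log (R / r) * (π * Real.log (R / ‖z‖) / Real.log (R / r))) := by
        field_simp
    _ ≤ annulusHypDensity r R z :=
        div_le_div_of_nonneg_left pi_pos.le (by positivity)
          (mul_le_mul_of_nonneg_left (sin_le (by positivity)) (by positivity))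

end Annulus

section HypDist

variable {r R : ℝ} {z₁ z₂ : ℂ}

theorem abs_sub_le_annulusHypDist (hr : 0 < r) {f f' : ℝ → ℝ}
    (hf : ∀ s ∈ Ioo r R, HasDerivAt f (f' s) s)
    (hf' : ∀ z ∈ annulus r R, |f' ‖z‖| ≤ annulusHypDensity r R z)
    (hz₁ : z₁ ∈ annulus r R) (hz₂ : z₂ ∈ annulus r R) :
    |f ‖z₂‖ - f ‖z₁‖| ≤ annulusHypDist r R z₁ z₂ := by
  -- `sInf ∅ = 0` in `ℝ`, so an admissible path has to be exhibited.
  obtain ⟨γ, hγ₀, hγ₁, hγU, hγ⟩ := exists_contDiff_path_annulus hz₁ hz₂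
  refine le_csInf ⟨_, γ, hγ₀, hγ₁, hγU, hγ.contDiffOn, rfl⟩ ?_
  rintro _ ⟨γ, rfl, rfl, hγU, hγ, rfl⟩
  have hnorm : ∀ z ∈ annulus r R, DifferentiableAt ℝ (‖·‖) z := fun z hz =>
    (contDiffAt_norm ℝ (norm_pos_iff.1 (hr.trans hz.1))).differentiableAt one_ne_zero
  refine abs_sub_le_integral_of_norm_hasFDerivAt_le (G := fun w : ℂ => f ‖w‖) zero_le_one
    (fun z hz => (hf _ hz).comp_hasFDerivAt z (hnorm z hz).hasFDerivAt) (fun z hz => ?_) hγU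
    hγ.continuousOn (fun t ht => ?_)
    (hγ.integrableOn_comp_mul_norm_deriv zero_lt_one hγU (continuousOn_annulusHypDensity hr))
  · rw [norm_smul, norm_fderiv_norm (hnorm z hz), mul_one, Real.norm_eq_abs]
    exact hf' z hz
  · exact (hγ.differentiableOn one_ne_zero t (Ioo_subset_Icc_self ht)).differentiableAt
      (Icc_mem_nhds ht.1 ht.2)

theorem mul_abs_log_div_le_annulusHypDist (hr : 0 < r) (hz₁ : z₁ ∈ annulus r R)
    (hz₂ : z₂ ∈ annulus r R) :
    π / Real.log (R / r) * |Real.log (‖z₁‖ / ‖z₂‖)| ≤ annulusHypDist r R z₁ z₂ := by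
  have hM := log_div_pos_of_mem_annulus hr hz₁
  have h := abs_sub_le_annulusHypDist hr (f := fun s => π / Real.log (R / r) * Real.log s)
    (f' := fun s => π / Real.log (R / r) * s⁻¹)
    (fun s hs => (hasDerivAt_log (hr.trans hs.1).ne').const_mul _) (fun z hz => ?_) hz₁ hz₂
  · rwa [← mul_sub, abs_mul, abs_of_pos (div_pos pi_pos hM), abs_sub_comm,
      ← Real.log_div (hr.trans hz₁.1).ne' (hr.trans hz₂.1).ne'] at h
  · have hz₀ : 0 < ‖z‖ := hr.trans hz.1
    calc |π / Real.log (R / r) * ‖z‖⁻¹| = π / (‖z‖ * Real.log (R / r)) := by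
          rw [abs_of_pos (by positivity)]
          field_simp
      _ ≤ annulusHypDensity r R z := div_norm_mul_log_le_annulusHypDensity hr hz

theorem abs_log_div_log_le_annulusHypDist (hr : 0 < r) (hz₁ : z₁ ∈ annulus r R)
    (hz₂ : z₂ ∈ annulus r R) :
    |Real.log (Real.log (R / ‖z₂‖) / Real.log (R / ‖z₁‖))| ≤ annulusHypDist r R z₁ z₂ := by
  have hR : 0 < R := hr.trans (hz₁.1.trans hz₁.2)
  have hlog_div : ∀ z ∈ annulus r R, Real.log R - Real.log ‖z‖ = Real.log (R / ‖z‖) :=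
    fun z hz => (Real.log_div hR.ne' (hr.trans hz.1).ne').symm
  have h := abs_sub_le_annulusHypDist hr (f := fun s => Real.log (Real.log R - Real.log s))
    (f' := fun s => -s⁻¹ / (Real.log R - Real.log s))
    (fun s hs => ((hasDerivAt_log (hr.trans hs.1).ne').const_sub _).log ?_) (fun z hz => ?_)
    hz₁ hz₂
  · rwa [hlog_div z₁ hz₁, hlog_div z₂ hz₂, ← Real.log_div
      (log_div_norm_pos_of_mem_annulus hr hz₂).ne' (log_div_norm_pos_of_mem_annulus hr hz₁).ne']
      at h
  · exact sub_ne_zero.2 (Real.log_lt_log (hr.trans hs.1) hs.2).ne'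
  · have hz₀ : 0 < ‖z‖ := hr.trans hz.1
    have hL := log_div_norm_pos_of_mem_annulus hr hz
    calc |-‖z‖⁻¹ / (Real.log R - Real.log ‖z‖)| = 1 / (‖z‖ * Real.log (R / ‖z‖)) := by
          rw [hlog_div z hz, abs_div, abs_neg, abs_of_pos (inv_pos.2 hz₀), abs_of_pos hL]
          field_simp
      _ ≤ annulusHypDensity r R z := one_div_norm_mul_log_le_annulusHypDensity hr hz

end HypDist

theorem annulusHypDist_lower_bound_general (r R : ℝ) (hr : 0 < r)
    (z₁ z₂ : ℂ) (hz₁ : z₁ ∈ annulus r R) (hz₂ : z₂ ∈ annulus r R) :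
    annulusHypDist r R z₁ z₂ ≥
      max (π / Real.log (R / r) * Real.log (‖z₁‖ / ‖z₂‖))
        (Real.log (Real.log (R / ‖z₂‖) / Real.log (R / ‖z₁‖))) := by
  have hM := log_div_pos_of_mem_annulus hr hz₁
  refine max_le ?_ ((le_abs_self _).trans (abs_log_div_log_le_annulusHypDist hr hz₁ hz₂))
  exact (mul_le_mul_of_nonneg_left (le_abs_self _) (div_pos pi_pos hM).le).trans
    (mul_abs_log_div_le_annulusHypDist hr hz₁ hz₂)

/-- Lower bound for the hyperbolic distance in an annulus: for `0 < r < R`,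
`z₁, z₂ ∈ A(r,R)` with `|z₂| ≤ |z₁|`,
`d_A(z₁,z₂) ≥ max ((π / mod A) log (|z₁|/|z₂|)) (log (log (R/|z₂|) / log (R/|z₁|)))`,
where `mod A = log (R/r)`. -/
theorem annulusHypDist_lower_bound (r R : ℝ) (hr : 0 < r) (hrR : r < R)
    (z₁ z₂ : ℂ) (hz₁ : z₁ ∈ annulus r R) (hz₂ : z₂ ∈ annulus r R)
    (habs : ‖z₂‖ ≤ ‖z₁‖) :
    annulusHypDist r R z₁ z₂ ≥
      max (π / Real.log (R / r) * Real.log (‖z₁‖ / ‖z₂‖))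
        (Real.log (Real.log (R / ‖z₂‖) / Real.log (R / ‖z₁‖))) :=
  annulusHypDist_lower_bound_general r R hr z₁ z₂ hz₁ hz₂
end

section
/- Let A = A(r,R) with 0 < r < R, and let z₁, z₂ ∈ A with |z₂| ≤ |z₁|. Then d_A(z₁,z₂) ≤ π²/(mod(A)·K̂₀) + (π/(mod(A)·K̂₁)) · log(|z₁|/|z₂|), where K̂₀ = max_{j=1,2} sin(π log(R/|z_j|)/mod(A)) and K̂₁ = min_{j=1,2} sin(π log(R/|z_j|)/mod(A)). -/
/-!
In logarithmic coordinates `w = log z` the hyperbolic length element of `A(r, R)` is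
`π |dw| / (mod A · sin (π (log R - Re w) / mod A))`. Join `z₁` to `z₂` by an arc, turning by
`|arg (z₂ / z₁)| ≤ π`, of whichever circle `|z| = |z_j|` has the larger sine `K̂₀`, and by a radial
segment between `|z₂|` and `|z₁|`, along which the sine stays above the smaller endpoint value `K̂₁`
because `sin` is concave on `[0, π]`. Running the two legs along `smoothTransition` schedules whose
derivatives have disjoint supports makes the concatenation a single `C¹` path.
-/

open Real Complex

open Set

noncomputable def annulusSin (r R ρ : ℝ) : ℝ :=
  Real.sin (π * Real.log (R / ρ) / Real.log (R / r))

section Annulus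

variable {r R : ℝ}

lemma annulusSin_pos (hr : 0 < r) {ρ : ℝ} (hrρ : r < ρ) (hρR : ρ < R) :
    0 < annulusSin r R ρ := by
  have hρ : 0 < ρ := hr.trans hrρ
  have hR : 0 < R := hρ.trans hρR
  have hlog : 0 < Real.log (R / ρ) := Real.log_pos ((one_lt_div hρ).2 hρR)
  have hlog_lt : Real.log (R / ρ) < Real.log (R / r) :=
    Real.log_lt_log (div_pos hR hρ) (div_lt_div_of_pos_left hR hr hrρ)
  refine Real.sin_pos_of_pos_of_lt_pi (div_pos (mul_pos pi_pos hlog) (hlog.trans hlog_lt)) ?_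
  rw [div_lt_iff₀ (hlog.trans hlog_lt)]
  exact mul_lt_mul_of_pos_left hlog_lt pi_pos

lemma min_annulusSin_le (hr : 0 < r) {ρ₁ ρ₂ ρ : ℝ} (h₂ : r ≤ ρ₂) (h₂ρ : ρ₂ ≤ ρ) (hρ₁ : ρ ≤ ρ₁)
    (h₁ : ρ₁ ≤ R) : min (annulusSin r R ρ₁) (annulusSin r R ρ₂) ≤ annulusSin r R ρ := by
  set θ : ℝ → ℝ := fun x => π * Real.log (R / x) / Real.log (R / r)
  have hR : 0 < R := (((hr.trans_le h₂).trans_le h₂ρ).trans_le hρ₁).trans_le h₁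
  have hm : 0 ≤ Real.log (R / r) :=
    Real.log_nonneg ((one_le_div hr).2 (h₂.trans (h₂ρ.trans (hρ₁.trans h₁))))
  have θ_anti {x y : ℝ} (hx : 0 < x) (hxy : x ≤ y) : θ y ≤ θ x := by
    have : Real.log (R / y) ≤ Real.log (R / x) :=
      Real.log_le_log (div_pos hR (hx.trans_le hxy)) (div_le_div_of_nonneg_left hR.le hx hxy)
    simp only [θ]
    gcongr
  have hθ₁ : 0 ≤ θ ρ₁ := by simpa [θ] using θ_anti (hr.trans_le (h₂.trans (h₂ρ.trans hρ₁))) h₁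
  have hθ₂ : θ ρ₂ ≤ π := (θ_anti hr h₂).trans <| by
    simpa only [θ, mul_div_assoc] using mul_le_of_le_one_right pi_pos.le (div_self_le_one _)
  have hρ₂ : 0 < ρ₂ := hr.trans_le h₂
  have hθ : θ ρ₁ ≤ θ ρ ∧ θ ρ ≤ θ ρ₂ := ⟨θ_anti (hρ₂.trans_le h₂ρ) hρ₁, θ_anti hρ₂ h₂ρ⟩
  refine strictConcaveOn_sin_Icc.concaveOn.ge_on_segment ⟨hθ₁, (hθ.1.trans hθ.2).trans hθ₂⟩
    ⟨hθ₁.trans (hθ.1.trans hθ.2), hθ₂⟩ ?_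
  rw [segment_eq_Icc (hθ.1.trans hθ.2)]
  exact hθ

lemma annulusHypDensity_nonneg (hr : 0 < r) {z : ℂ} (hz : z ∈ annulus r R) :
    0 ≤ annulusHypDensity r R z := by
  have hm : 0 < Real.log (R / r) := Real.log_pos ((one_lt_div hr).2 (hz.1.trans hz.2))
  have hz0 : 0 < ‖z‖ := hr.trans hz.1
  exact div_nonneg pi_pos.le (mul_pos (mul_pos hz0 hm) (annulusSin_pos hr hz.1 hz.2)).le

lemma annulusHypDist_le_integral_of_le (hr : 0 < r) {z₁ z₂ : ℂ} {γ : ℝ → ℂ} (hγ0 : γ 0 = z₁)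
    (hγ1 : γ 1 = z₂) (hγA : ∀ t ∈ Icc (0 : ℝ) 1, γ t ∈ annulus r R)
    (hγ : ContDiffOn ℝ 1 γ (Icc 0 1)) {G : ℝ → ℝ}
    (hG : IntervalIntegrable G MeasureTheory.volume 0 1)
    (hle : ∀ t ∈ Icc (0 : ℝ) 1, annulusHypDensity r R (γ t) * ‖deriv γ t‖ ≤ G t) :
    annulusHypDist r R z₁ z₂ ≤ ∫ t in (0 : ℝ)..1, G t := by
  have length_nonneg {γ : ℝ → ℂ} (hγA : ∀ t ∈ Icc (0 : ℝ) 1, γ t ∈ annulus r R) :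
      ∀ t ∈ Icc (0 : ℝ) 1, 0 ≤ annulusHypDensity r R (γ t) * ‖deriv γ t‖ := fun t ht =>
    mul_nonneg (annulusHypDensity_nonneg hr (hγA t ht)) (norm_nonneg _)
  calc annulusHypDist r R z₁ z₂
      ≤ ∫ t in (0 : ℝ)..1, annulusHypDensity r R (γ t) * ‖deriv γ t‖ := by
        refine csInf_le ⟨0, ?_⟩ ⟨γ, hγ0, hγ1, hγA, hγ, rfl⟩
        rintro _ ⟨γ', -, -, hγ'A, -, rfl⟩
        exact intervalIntegral.integral_nonneg zero_le_one (length_nonneg hγ'A)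
    _ ≤ ∫ t in (0 : ℝ)..1, G t := by
        rw [intervalIntegral.integral_of_le zero_le_one,
          intervalIntegral.integral_of_le zero_le_one]
        exact MeasureTheory.setIntegral_mono_of_nonneg
          (fun t ht => length_nonneg hγA t (Ioc_subset_Icc_self ht))
          (fun t ht => hle t (Ioc_subset_Icc_self ht)) hG.1

lemma annulusHypDensity_cexp_mul_norm_deriv {w : ℝ → ℂ} {w' : ℂ} {t : ℝ}
    (hw : HasDerivAt w w' t) :
    annulusHypDensity r R (Complex.exp (w t)) * ‖deriv (fun s => Complex.exp (w s)) t‖ =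
      π * ‖w'‖ / (Real.log (R / r) * annulusSin r R ‖Complex.exp (w t)‖) := by
  have hexp : ‖Complex.exp (w t)‖ ≠ 0 := by simp
  rw [hw.cexp.deriv, norm_mul]
  unfold annulusHypDensity annulusSin
  field_simp

end Annulus

lemma mul_div_rpow_mem_Icc {a b s : ℝ} (hb : 0 < b) (hba : b ≤ a) (hs : s ∈ Icc (0 : ℝ) 1) :
    a * (b / a) ^ s ∈ Icc b a := by
  have ha : 0 < a := hb.trans_le hba
  have hq : b / a ≤ 1 := (div_le_one ha).2 hba
  constructor
  · calc b = a * (b / a) ^ (1 : ℝ) := by rw [Real.rpow_one, mul_div_cancel₀ _ ha.ne']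
      _ ≤ a * (b / a) ^ s := mul_le_mul_of_nonneg_left
          (Real.rpow_le_rpow_of_exponent_ge (by positivity) hq hs.2) ha.le
  · exact mul_le_of_le_one_right ha.le (Real.rpow_le_one (by positivity) hq hs.1)

structure IsSchedule (u : ℝ → ℝ) : Prop where
  contDiff : ContDiff ℝ 1 u
  monotone : Monotone u
  map_zero : u 0 = 0
  map_one : u 1 = 1

namespace IsSchedule

variable {u : ℝ → ℝ} (hu : IsSchedule u)
include hu

lemma mem_Icc {t : ℝ} (ht : t ∈ Icc (0 : ℝ) 1) : u t ∈ Icc (0 : ℝ) 1 := by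
  simpa only [Set.mem_Icc, hu.map_zero, hu.map_one] using
    And.intro (hu.monotone ht.1) (hu.monotone ht.2)

lemma deriv_nonneg (t : ℝ) : 0 ≤ deriv u t := hu.monotone.deriv_nonneg

lemma continuous_deriv : Continuous (deriv u) := hu.contDiff.continuous_deriv le_rfl

lemma integral_deriv : ∫ t in (0 : ℝ)..1, deriv u t = 1 := by
  rw [intervalIntegral.integral_deriv_of_contDiffOn_Icc hu.contDiff.contDiffOn zero_le_one,
    hu.map_zero, hu.map_one, sub_zero]

lemma exists_deriv_ne_zero : ∃ t ∈ Icc (0 : ℝ) 1, deriv u t ≠ 0 := by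
  by_contra! h
  have := hu.integral_deriv
  rw [intervalIntegral.integral_congr fun t ht => h t (uIcc_of_le (zero_le_one' ℝ) ▸ ht),
    intervalIntegral.integral_zero] at this
  exact zero_ne_one this

end IsSchedule

noncomputable def firstHalfStep (t : ℝ) : ℝ := smoothTransition (2 * t)

noncomputable def secondHalfStep (t : ℝ) : ℝ := smoothTransition (2 * t - 1)

lemma isSchedule_firstHalfStep : IsSchedule firstHalfStep where
  contDiff := smoothTransition.contDiff.comp (contDiff_const.mul contDiff_id)
  monotone := smoothTransition.monotone.comp fun _ _ h => by linarith
  map_zero := by simp [firstHalfStep]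
  map_one := by simp [firstHalfStep]

lemma isSchedule_secondHalfStep : IsSchedule secondHalfStep where
  contDiff := smoothTransition.contDiff.comp ((contDiff_const.mul contDiff_id).sub contDiff_const)
  monotone := smoothTransition.monotone.comp fun _ _ h => by linarith
  map_zero := by simp [secondHalfStep]
  map_one := by norm_num [secondHalfStep]

lemma secondHalfStep_eq_zero_of_deriv_firstHalfStep_ne_zero {t : ℝ}
    (h : deriv firstHalfStep t ≠ 0) : secondHalfStep t = 0 := by
  contrapose! h
  have h2t : 1 ≤ 2 * t := by
    have := mt smoothTransition.zero_of_nonpos h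
    linarith
  have hmax : IsLocalMax firstHalfStep t := Filter.Eventually.of_forall fun s => by
    simp only [firstHalfStep, smoothTransition.one_of_one_le h2t, smoothTransition.le_one]
  exact hmax.deriv_eq_zero

lemma firstHalfStep_eq_one_of_deriv_secondHalfStep_ne_zero {t : ℝ}
    (h : deriv secondHalfStep t ≠ 0) : firstHalfStep t = 1 := by
  contrapose! h
  have h2t : 2 * t - 1 ≤ 0 := by
    have := mt smoothTransition.one_of_one_le h
    linarith
  have hmin : IsLocalMin secondHalfStep t := Filter.Eventually.of_forall fun s => by
    simp only [secondHalfStep, smoothTransition.zero_of_nonpos h2t, smoothTransition.nonneg]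
  exact hmin.deriv_eq_zero

noncomputable def logSchedulePath (z₁ z₂ : ℂ) (u v : ℝ → ℝ) (t : ℝ) : ℂ :=
  Complex.log z₁ + (u t * Real.log (‖z₂‖ / ‖z₁‖) + v t * arg (z₂ / z₁) * I)

noncomputable def schedulePath (z₁ z₂ : ℂ) (u v : ℝ → ℝ) (t : ℝ) : ℂ :=
  Complex.exp (logSchedulePath z₁ z₂ u v t)

section SchedulePath

variable {z₁ z₂ : ℂ} {u v : ℝ → ℝ}

lemma schedulePath_zero (hu : u 0 = 0) (hv : v 0 = 0) (hz₁ : z₁ ≠ 0) :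
    schedulePath z₁ z₂ u v 0 = z₁ := by
  simp [schedulePath, logSchedulePath, hu, hv, Complex.exp_log hz₁]

lemma schedulePath_one (hu : u 1 = 1) (hv : v 1 = 1) (hz₁ : z₁ ≠ 0) (hz₂ : z₂ ≠ 0) :
    schedulePath z₁ z₂ u v 1 = z₂ := by
  have hlog : Complex.log (z₂ / z₁) = Real.log (‖z₂‖ / ‖z₁‖) + arg (z₂ / z₁) * I := by
    rw [Complex.log, norm_div]
  simp only [schedulePath, logSchedulePath, hu, hv, Complex.ofReal_one, one_mul, ← hlog,
    Complex.exp_add, Complex.exp_log hz₁, Complex.exp_log (div_ne_zero hz₂ hz₁)]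
  field_simp

lemma norm_schedulePath (hz₁ : z₁ ≠ 0) (hz₂ : z₂ ≠ 0) (t : ℝ) :
    ‖schedulePath z₁ z₂ u v t‖ = ‖z₁‖ * (‖z₂‖ / ‖z₁‖) ^ u t := by
  rw [schedulePath, Complex.norm_exp, Real.rpow_def_of_pos (by positivity)]
  simp [logSchedulePath, Real.exp_add, Complex.log_re, Real.exp_log (norm_pos_iff.2 hz₁), mul_comm]

lemma hasDerivAt_logSchedulePath {t : ℝ} (hu : DifferentiableAt ℝ u t)
    (hv : DifferentiableAt ℝ v t) :
    HasDerivAt (logSchedulePath z₁ z₂ u v)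
      (deriv u t * Real.log (‖z₂‖ / ‖z₁‖) + deriv v t * arg (z₂ / z₁) * I) t :=
  (((hu.hasDerivAt.ofReal_comp).mul_const _).add
    (((hv.hasDerivAt.ofReal_comp).mul_const _).mul_const I)).const_add _

lemma contDiff_schedulePath (hu : ContDiff ℝ 1 u) (hv : ContDiff ℝ 1 v) :
    ContDiff ℝ 1 (schedulePath z₁ z₂ u v) :=
  Complex.contDiff_exp.comp (contDiff_const.add
    (((ofRealCLM.contDiff.comp hu).mul contDiff_const).add
      (((ofRealCLM.contDiff.comp hv).mul contDiff_const).mul contDiff_const)))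

end SchedulePath

lemma annulusHypDensity_schedulePath_mul_norm_deriv_le {r R : ℝ} {z₁ z₂ : ℂ} {u v : ℝ → ℝ}
    {t : ℝ} (hz₁ : z₁ ≠ 0) (hz₂ : z₂ ≠ 0) (habs : ‖z₂‖ ≤ ‖z₁‖) (hu : Monotone u)
    (hv : Monotone v) (hut : DifferentiableAt ℝ u t) (hvt : DifferentiableAt ℝ v t)
    (hS : 0 ≤ Real.log (R / r) * annulusSin r R (‖z₁‖ * (‖z₂‖ / ‖z₁‖) ^ u t)) :
    annulusHypDensity r R (schedulePath z₁ z₂ u v t) * ‖deriv (schedulePath z₁ z₂ u v) t‖ ≤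
      π * (deriv u t * Real.log (‖z₁‖ / ‖z₂‖) + deriv v t * |arg (z₂ / z₁)|) /
        (Real.log (R / r) * annulusSin r R (‖z₁‖ * (‖z₂‖ / ‖z₁‖) ^ u t)) := by
  have hw := hasDerivAt_logSchedulePath (z₁ := z₁) (z₂ := z₂) hut hvt
  have hnorm : ‖(deriv u t * Real.log (‖z₂‖ / ‖z₁‖) + deriv v t * arg (z₂ / z₁) * I : ℂ)‖ ≤
      deriv u t * Real.log (‖z₁‖ / ‖z₂‖) + deriv v t * |arg (z₂ / z₁)| := by
    have hlog : Real.log (‖z₂‖ / ‖z₁‖) = -Real.log (‖z₁‖ / ‖z₂‖) := by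
      rw [← Real.log_inv, inv_div]
    have hlog_nonneg : 0 ≤ Real.log (‖z₁‖ / ‖z₂‖) :=
      Real.log_nonneg ((one_le_div (norm_pos_iff.2 hz₂)).2 habs)
    refine (Complex.norm_le_abs_re_add_abs_im _).trans_eq ?_
    simp [hlog, abs_mul, abs_of_nonneg hu.deriv_nonneg, abs_of_nonneg hv.deriv_nonneg,
      abs_of_nonneg hlog_nonneg]
  rw [← norm_schedulePath hz₁ hz₂]
  exact (annulusHypDensity_cexp_mul_norm_deriv hw).trans_le
    (div_le_div_of_nonneg_right (mul_le_mul_of_nonneg_left hnorm pi_pos.le)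
      (norm_schedulePath (u := u) (v := v) hz₁ hz₂ t ▸ hS))

lemma annulusHypDensity_schedulePath_mul_norm_deriv_le_of_isSchedule {r R : ℝ} (hr : 0 < r)
    {z₁ z₂ : ℂ} (hz₁ : z₁ ∈ annulus r R) (hz₂ : z₂ ∈ annulus r R) (habs : ‖z₂‖ ≤ ‖z₁‖)
    {u v : ℝ → ℝ} (hu : IsSchedule u) (hv : IsSchedule v) {e : ℝ}
    (he : ∀ t, deriv v t ≠ 0 → u t = e) {t : ℝ} (ht : t ∈ Icc (0 : ℝ) 1) :
    annulusHypDensity r R (schedulePath z₁ z₂ u v t) * ‖deriv (schedulePath z₁ z₂ u v) t‖ ≤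
      π * Real.log (‖z₁‖ / ‖z₂‖) /
          (Real.log (R / r) * min (annulusSin r R ‖z₁‖) (annulusSin r R ‖z₂‖)) * deriv u t +
        π * |arg (z₂ / z₁)| /
          (Real.log (R / r) * annulusSin r R (‖z₁‖ * (‖z₂‖ / ‖z₁‖) ^ e)) * deriv v t := by
  set m := Real.log (R / r)
  set S := annulusSin r R (‖z₁‖ * (‖z₂‖ / ‖z₁‖) ^ u t)
  have hm : 0 < m := Real.log_pos ((one_lt_div hr).2 (hz₁.1.trans hz₁.2))
  have hK₁ : 0 < min (annulusSin r R ‖z₁‖) (annulusSin r R ‖z₂‖) :=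
    lt_min (annulusSin_pos hr hz₁.1 hz₁.2) (annulusSin_pos hr hz₂.1 hz₂.2)
  have hK₁_le : min (annulusSin r R ‖z₁‖) (annulusSin r R ‖z₂‖) ≤ S :=
    have h := mul_div_rpow_mem_Icc (hr.trans hz₂.1) habs (hu.mem_Icc ht)
    min_annulusSin_le hr hz₂.1.le h.1 h.2 hz₁.2.le
  -- the argument only moves while the radius is the one at `u = e`
  have harc : π * |arg (z₂ / z₁)| / (m * S) * deriv v t =
      π * |arg (z₂ / z₁)| / (m * annulusSin r R (‖z₁‖ * (‖z₂‖ / ‖z₁‖) ^ e)) * deriv v t := by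
    rcases eq_or_ne (deriv v t) 0 with h | h
    · rw [h, mul_zero, mul_zero]
    · simp only [S, he t h]
  calc _ ≤ π * (deriv u t * Real.log (‖z₁‖ / ‖z₂‖) + deriv v t * |arg (z₂ / z₁)|) / (m * S) :=
        annulusHypDensity_schedulePath_mul_norm_deriv_le (norm_pos_iff.1 (hr.trans hz₁.1))
          (norm_pos_iff.1 (hr.trans hz₂.1)) habs hu.monotone hv.monotone
          (hu.contDiff.differentiable one_ne_zero t) (hv.contDiff.differentiable one_ne_zero t)
          (mul_pos hm (hK₁.trans_le hK₁_le)).le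
    _ = π * Real.log (‖z₁‖ / ‖z₂‖) / (m * S) * deriv u t +
          π * |arg (z₂ / z₁)| / (m * S) * deriv v t := by ring
    _ ≤ _ := by
      rw [harc]
      gcongr
      · exact hu.deriv_nonneg t
      · exact mul_nonneg pi_pos.le (Real.log_nonneg ((one_le_div (hr.trans hz₂.1)).2 habs))

theorem annulusHypDist_le_of_isSchedule {r R : ℝ} (hr : 0 < r) {z₁ z₂ : ℂ}
    (hz₁ : z₁ ∈ annulus r R) (hz₂ : z₂ ∈ annulus r R) (habs : ‖z₂‖ ≤ ‖z₁‖) {u v : ℝ → ℝ}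
    (hu : IsSchedule u) (hv : IsSchedule v) {e : ℝ} (he : ∀ t, deriv v t ≠ 0 → u t = e) :
    annulusHypDist r R z₁ z₂ ≤
      π ^ 2 / (Real.log (R / r) * annulusSin r R (‖z₁‖ * (‖z₂‖ / ‖z₁‖) ^ e)) +
        π / (Real.log (R / r) * min (annulusSin r R ‖z₁‖) (annulusSin r R ‖z₂‖)) *
          Real.log (‖z₁‖ / ‖z₂‖) := by
  set m := Real.log (R / r)
  set K₀ := annulusSin r R (‖z₁‖ * (‖z₂‖ / ‖z₁‖) ^ e)
  set K₁ := min (annulusSin r R ‖z₁‖) (annulusSin r R ‖z₂‖)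
  have hz₁0 : z₁ ≠ 0 := norm_pos_iff.1 (hr.trans hz₁.1)
  have hz₂0 : z₂ ≠ 0 := norm_pos_iff.1 (hr.trans hz₂.1)
  have hradius {s : ℝ} (hs : s ∈ Icc (0 : ℝ) 1) : ‖z₁‖ * (‖z₂‖ / ‖z₁‖) ^ s ∈ Ioo r R :=
    have h := mul_div_rpow_mem_Icc (hr.trans hz₂.1) habs hs
    ⟨hz₂.1.trans_le h.1, h.2.trans_lt hz₁.2⟩
  have hK₀ : 0 < m * K₀ := by
    obtain ⟨t, ht, hvt⟩ := hv.exists_deriv_ne_zero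
    have h := hradius (hu.mem_Icc ht)
    rw [he t hvt] at h
    exact mul_pos (Real.log_pos ((one_lt_div hr).2 (hz₁.1.trans hz₁.2))) (annulusSin_pos hr h.1 h.2)
  set G : ℝ → ℝ := fun t =>
    π * Real.log (‖z₁‖ / ‖z₂‖) / (m * K₁) * deriv u t + π * |arg (z₂ / z₁)| / (m * K₀) * deriv v t
  have hu_int := (hu.continuous_deriv.intervalIntegrable (μ := MeasureTheory.volume) 0 1).const_mul
    (π * Real.log (‖z₁‖ / ‖z₂‖) / (m * K₁))
  have hv_int := (hv.continuous_deriv.intervalIntegrable (μ := MeasureTheory.volume) 0 1).const_mul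
    (π * |arg (z₂ / z₁)| / (m * K₀))
  have hG : ∫ t in (0 : ℝ)..1, G t =
      π * Real.log (‖z₁‖ / ‖z₂‖) / (m * K₁) + π * |arg (z₂ / z₁)| / (m * K₀) := by
    rw [intervalIntegral.integral_add hu_int hv_int, intervalIntegral.integral_const_mul,
      intervalIntegral.integral_const_mul, hu.integral_deriv, hv.integral_deriv, mul_one, mul_one]
  calc annulusHypDist r R z₁ z₂ ≤ ∫ t in (0 : ℝ)..1, G t :=
        annulusHypDist_le_integral_of_le hr (schedulePath_zero hu.map_zero hv.map_zero hz₁0)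
          (schedulePath_one hu.map_one hv.map_one hz₁0 hz₂0)
          (fun t ht => by
            rw [annulus, Set.mem_ofPred_eq, norm_schedulePath hz₁0 hz₂0]
            exact hradius (hu.mem_Icc ht))
          (contDiff_schedulePath hu.contDiff hv.contDiff).contDiffOn (hu_int.add hv_int)
          fun t ht => annulusHypDensity_schedulePath_mul_norm_deriv_le_of_isSchedule hr hz₁ hz₂
            habs hu hv he ht
    _ = π * Real.log (‖z₁‖ / ‖z₂‖) / (m * K₁) + π * |arg (z₂ / z₁)| / (m * K₀) := hG
    _ ≤ _ := by
      rw [add_comm, pow_two, div_mul_eq_mul_div]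
      gcongr
      exact Complex.abs_arg_le_pi _

theorem annulusHypDist_upper_bound_general (r R : ℝ) (hr : 0 < r)
    (z₁ z₂ : ℂ) (hz₁ : z₁ ∈ annulus r R) (hz₂ : z₂ ∈ annulus r R)
    (habs : ‖z₂‖ ≤ ‖z₁‖) :
    annulusHypDist r R z₁ z₂ ≤
      π ^ 2 / (Real.log (R / r) *
          max (Real.sin (π * Real.log (R / ‖z₁‖) / Real.log (R / r)))
            (Real.sin (π * Real.log (R / ‖z₂‖) / Real.log (R / r)))) +
        π / (Real.log (R / r) *
          min (Real.sin (π * Real.log (R / ‖z₁‖) / Real.log (R / r)))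
            (Real.sin (π * Real.log (R / ‖z₂‖) / Real.log (R / r)))) *
          Real.log (‖z₁‖ / ‖z₂‖) := by
  show annulusHypDist r R z₁ z₂ ≤
    π ^ 2 / (Real.log (R / r) * max (annulusSin r R ‖z₁‖) (annulusSin r R ‖z₂‖)) +
      π / (Real.log (R / r) * min (annulusSin r R ‖z₁‖) (annulusSin r R ‖z₂‖)) *
        Real.log (‖z₁‖ / ‖z₂‖)
  rcases max_choice (annulusSin r R ‖z₁‖) (annulusSin r R ‖z₂‖) with h | h <;> rw [h]
  · -- arc on `|z| = |z₁|` first, then radially inwards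
    simpa only [Real.rpow_zero, mul_one] using
      annulusHypDist_le_of_isSchedule hr hz₁ hz₂ habs isSchedule_secondHalfStep
        isSchedule_firstHalfStep fun _ ↦ secondHalfStep_eq_zero_of_deriv_firstHalfStep_ne_zero
  · -- radially inwards first, then arc on `|z| = |z₂|`
    simpa only [Real.rpow_one, mul_div_cancel₀ _ (hr.trans hz₁.1).ne'] using
      annulusHypDist_le_of_isSchedule hr hz₁ hz₂ habs isSchedule_firstHalfStep
        isSchedule_secondHalfStep fun _ ↦ firstHalfStep_eq_one_of_deriv_secondHalfStep_ne_zero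

/-- Upper bound for the hyperbolic distance in an annulus: for `0 < r < R`,
`z₁, z₂ ∈ A(r,R)` with `|z₂| ≤ |z₁|`,
`d_A(z₁,z₂) ≤ π²/(mod A · K̂₀) + (π/(mod A · K̂₁)) · log (|z₁|/|z₂|)`, where
`K̂ⱼ` are the max/min of `sin (π log (R/|z_j|) / mod A)` and `mod A = log (R/r)`. -/
theorem annulusHypDist_upper_bound (r R : ℝ) (hr : 0 < r) (hrR : r < R)
    (z₁ z₂ : ℂ) (hz₁ : z₁ ∈ annulus r R) (hz₂ : z₂ ∈ annulus r R)
    (habs : ‖z₂‖ ≤ ‖z₁‖) :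
    annulusHypDist r R z₁ z₂ ≤
      π ^ 2 / (Real.log (R / r) *
          max (Real.sin (π * Real.log (R / ‖z₁‖) / Real.log (R / r)))
            (Real.sin (π * Real.log (R / ‖z₂‖) / Real.log (R / r)))) +
        π / (Real.log (R / r) *
          min (Real.sin (π * Real.log (R / ‖z₁‖) / Real.log (R / r)))
            (Real.sin (π * Real.log (R / ‖z₂‖) / Real.log (R / r)))) *
          Real.log (‖z₁‖ / ‖z₂‖) :=
  annulusHypDist_upper_bound_general r R hr z₁ z₂ hz₁ hz₂ habs
end

section
/- Let A = A(r,R) with 0 < r < R and let z₁, z₂ ∈ A satisfy R/|z₁| = (R/r)^σ and R/|z₂| = (R/r)^τ with 0 < σ ≤ τ < 1. Then max{(τ−σ)π, log(τ/σ)} ≤ d_A(z₁,z₂) ≤ π²/(K̂₀ mod(A)) + (τ−σ)π/K̂₁, where K̂₀ = max{sin(σπ), sin(τπ)} and K̂₁ = min{sin(σπ), sin(τπ)}. -/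
open Real Complex

open Set intervalIntegral MeasureTheory

lemma hasDerivAt_maxsq (x : ℝ) : HasDerivAt (fun x : ℝ => (max x 0)^2) (2 * max x 0) x := by
  rcases lt_trichotomy x 0 with hx | rfl | hx
  · have h : (fun x : ℝ => (max x 0)^2) =ᶠ[nhds x] fun _ => (0:ℝ) := by
      filter_upwards [eventually_lt_nhds hx] with y hy
      simp [max_eq_right hy.le]
    rw [max_eq_right hx.le, mul_zero]
    exact (hasDerivAt_const x (0:ℝ)).congr_of_eventuallyEq h
  · rw [hasDerivAt_iff_tendsto_slope]
    simp only [max_self, mul_zero]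
    have habs : Filter.Tendsto (fun h : ℝ => |h|) (nhdsWithin 0 {0}ᶜ) (nhds 0) := by
      have := _root_.continuous_abs.tendsto (0:ℝ)
      simpa using this.mono_left nhdsWithin_le_nhds
    apply squeeze_zero_norm' (a := fun h : ℝ => |h|) ?_ habs
    filter_upwards [self_mem_nhdsWithin] with h (hh : h ∈ ({0}ᶜ : Set ℝ))
    have hh' : h ≠ 0 := hh
    have hs : slope (fun x : ℝ => (max x 0)^2) 0 h = (max h 0)^2 / h := by
      simp [slope_def_field]
    rw [hs, Real.norm_eq_abs, abs_div]
    have h1 : |(max h 0)^2| ≤ |h|^2 := by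
      rw [_root_.abs_pow]
      have : |max h 0| ≤ |h| := by
        rcases le_total h 0 with h0 | h0 <;> simp [max_eq_right, max_eq_left, h0, abs_nonneg]
      exact pow_le_pow_left₀ (abs_nonneg _) this 2
    calc |(max h 0)^2| / |h| ≤ |h|^2 / |h| :=
          div_le_div_of_nonneg_right h1 (abs_nonneg h)
      _ = |h| := by field_simp [sq]
  · have h : (fun x : ℝ => (max x 0)^2) =ᶠ[nhds x] fun y => y^2 := by
      filter_upwards [eventually_gt_nhds hx] with y hy
      simp [max_eq_left hy.le]
    rw [max_eq_left hx.le]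
    have := (hasDerivAt_pow 2 x).congr_of_eventuallyEq h
    simpa [mul_comm] using this

lemma annulus_length_lower (r R : ℝ) (hr : 0 < r) (hrR : r < R) (σ τ : ℝ)
    (hσ : 0 < σ) (hστ : σ ≤ τ) (hτ : τ < 1) (z₁ z₂ : ℂ)
    (h₁ : Real.log (R / ‖z₁‖) = σ * Real.log (R / r))
    (h₂ : Real.log (R / ‖z₂‖) = τ * Real.log (R / r))
    (γ : ℝ → ℂ) (hγ0 : γ 0 = z₁) (hγ1 : γ 1 = z₂)
    (hmem : ∀ t ∈ Set.Icc (0:ℝ) 1, γ t ∈ annulus r R)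
    (hC : ContDiffOn ℝ 1 γ (Set.Icc (0:ℝ) 1)) :
    max ((τ - σ) * π) (Real.log (τ / σ)) ≤
      ∫ t in (0:ℝ)..1, annulusHypDensity r R (γ t) * ‖deriv γ t‖ := by
  have hR : 0 < R := hr.trans hrR
  have hm : 0 < Real.log (R / r) := Real.log_pos ((one_lt_div hr).2 hrR)
  set m := Real.log (R / r) with hmdef
  set ρ : ℝ → ℝ := fun t => ‖γ t‖ with hρdef
  have hρr : ∀ t ∈ Set.Icc (0:ℝ) 1, r < ρ t := fun t ht => (hmem t ht).1
  have hρpos : ∀ t ∈ Set.Icc (0:ℝ) 1, 0 < ρ t := fun t ht => hr.trans (hρr t ht)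
  have hρR : ∀ t ∈ Set.Icc (0:ℝ) 1, ρ t < R := fun t ht => (hmem t ht).2
  have hγne : ∀ t ∈ Set.Icc (0:ℝ) 1, γ t ≠ 0 := by
    intro t ht h0
    have := hρpos t ht
    rw [hρdef] at this; simp [h0] at this
  -- the relative level `v`, with `0 < v < 1` on the path
  set v : ℝ → ℝ := fun t => Real.log (R / ρ t) / m with hvdef
  have hv01 : ∀ t ∈ Set.Icc (0:ℝ) 1, 0 < v t ∧ v t < 1 := by
    intro t ht
    have h1 : (1:ℝ) < R / ρ t := (one_lt_div (hρpos t ht)).2 (hρR t ht)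
    have h2 : R / ρ t < R / r := div_lt_div_of_pos_left hR hr (hρr t ht)
    refine ⟨div_pos (Real.log_pos h1) hm, ?_⟩
    rw [div_lt_one hm]
    exact Real.log_lt_log (by positivity) h2
  have hv0 : v 0 = σ := by
    rw [hvdef]; simp only [hρdef, hγ0]
    rw [h₁, mul_div_assoc, div_self hm.ne', mul_one]
  have hv1 : v 1 = τ := by
    rw [hvdef]; simp only [hρdef, hγ1]
    rw [h₂, mul_div_assoc, div_self hm.ne', mul_one]
  -- the derivative data
  set g : ℝ → ℂ := fun t => derivWithin γ (Set.Icc (0:ℝ) 1) t with hgdef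
  have hγcont : ContinuousOn γ (Set.Icc (0:ℝ) 1) := hC.continuousOn
  have hgc : ContinuousOn g (Set.Icc (0:ℝ) 1) :=
    hC.continuousOn_derivWithin (uniqueDiffOn_Icc zero_lt_one) le_rfl
  have hdiff : ∀ t ∈ Set.Ioo (0:ℝ) 1, HasDerivAt γ (g t) t := by
    intro t ht
    have hIcc : Set.Icc (0:ℝ) 1 ∈ nhds t := Icc_mem_nhds ht.1 ht.2
    exact (((hC t (Set.Ioo_subset_Icc_self ht)).differentiableWithinAt
      one_ne_zero).hasDerivWithinAt).hasDerivAt hIcc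
  set e : ℝ → ℝ := fun t => (γ t).re * (g t).re + (γ t).im * (g t).im with hedef
  have hec : ContinuousOn e (Set.Icc (0:ℝ) 1) :=
    ((Complex.continuous_re.comp_continuousOn hγcont).mul
      (Complex.continuous_re.comp_continuousOn hgc)).add
      ((Complex.continuous_im.comp_continuousOn hγcont).mul
      (Complex.continuous_im.comp_continuousOn hgc))
  have hρcont : ContinuousOn ρ (Set.Icc (0:ℝ) 1) :=
    continuous_norm.comp_continuousOn hγcont
  have hρsq : ∀ t, ρ t ^ 2 = (γ t).re^2 + (γ t).im^2 := by
    intro t; rw [hρdef]; simp only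
    rw [Complex.sq_norm, Complex.normSq_apply]; ring
  set W : ℝ → ℝ := fun t => -(e t) / (ρ t ^ 2 * m) with hWdef
  have hWcont : ContinuousOn W (Set.Icc (0:ℝ) 1) := by
    apply (hec.neg.div ((hρcont.pow 2).mul continuousOn_const))
    intro t ht
    have := hρpos t ht
    exact mul_ne_zero (pow_ne_zero 2 this.ne') hm.ne'
  -- |e t| ≤ ρ t * ‖g t‖
  have he_bound : ∀ t, |e t| ≤ ρ t * ‖g t‖ := by
    intro t
    have : e t = ((starRingEnd ℂ) (γ t) * g t).re := by
      rw [hedef]; simp [Complex.mul_re]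
    rw [this]
    calc |((starRingEnd ℂ) (γ t) * g t).re| ≤ ‖(starRingEnd ℂ) (γ t) * g t‖ :=
          Complex.abs_re_le_norm _
      _ = ρ t * ‖g t‖ := by
          rw [norm_mul, Complex.norm_conj]
  -- v is continuous on Icc and differentiable with derivative W on Ioo
  have hvcont : ContinuousOn v (Set.Icc (0:ℝ) 1) := by
    apply ContinuousOn.div _ continuousOn_const (fun t _ => hm.ne')
    apply Real.continuousOn_log.comp (continuousOn_const.div hρcont (fun t ht => (hρpos t ht).ne'))
    intro t ht
    exact (div_pos hR (hρpos t ht)).ne'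
  have hv' : ∀ t ∈ Set.Ioo (0:ℝ) 1, HasDerivAt v (W t) t := by
    intro t ht
    have ht' := Set.Ioo_subset_Icc_self ht
    have hγ' := hdiff t ht
    have hre : HasDerivAt (fun s => (γ s).re) ((g t).re) t :=
      Complex.reCLM.hasFDerivAt.comp_hasDerivAt t hγ'
    have him : HasDerivAt (fun s => (γ s).im) ((g t).im) t :=
      Complex.imCLM.hasFDerivAt.comp_hasDerivAt t hγ'
    have hn : HasDerivAt (fun s => (γ s).re^2 + (γ s).im^2) (2 * e t) t := by
      have := ((hre.pow 2).add (him.pow 2))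
      exact this.congr_deriv (by simp only [hedef]; norm_num; ring)
    have hnpos : (0:ℝ) < (γ t).re^2 + (γ t).im^2 := by
      rw [← hρsq t]; exact pow_pos (hρpos t ht') 2
    have hlogn : HasDerivAt (fun s => Real.log ((γ s).re^2 + (γ s).im^2))
        (2 * e t / ((γ t).re^2 + (γ t).im^2)) t := by
      have := (Real.hasDerivAt_log hnpos.ne').comp t hn
      exact this.congr_deriv (by ring)
    have hveq : ∀ s ∈ Set.Icc (0:ℝ) 1,
        v s = (Real.log R - Real.log ((γ s).re^2 + (γ s).im^2) / 2) / m := by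
      intro s hs
      rw [hvdef]; simp only
      rw [Real.log_div hR.ne' (hρpos s hs).ne']
      congr 1
      rw [← hρsq s, Real.log_pow]
      push_cast; ring
    have hveq' : v =ᶠ[nhds t] fun s => (Real.log R - Real.log ((γ s).re^2 + (γ s).im^2) / 2) / m := by
      filter_upwards [Icc_mem_nhds ht.1 ht.2] with s hs using hveq s hs
    have : HasDerivAt (fun s => (Real.log R - Real.log ((γ s).re^2 + (γ s).im^2) / 2) / m)
        (W t) t := by
      have h2 := ((hasDerivAt_const t (Real.log R)).sub (hlogn.div_const 2)).div_const m
      refine h2.congr_deriv ?_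
      symm
      rw [hWdef]; simp only
      rw [hρsq t]
      field_simp
      ring
    exact this.congr_of_eventuallyEq hveq'
  -- the comparison integrand
  set F : ℝ → ℝ := fun t => annulusHypDensity r R (γ t) * ‖g t‖ with hFdef
  have hspos : ∀ t ∈ Set.Icc (0:ℝ) 1, 0 < Real.sin (π * v t) := by
    intro t ht
    apply Real.sin_pos_of_pos_of_lt_pi
    · have := (hv01 t ht).1; positivity
    · have := (hv01 t ht).2
      nlinarith [Real.pi_pos]
  have hdens : ∀ t ∈ Set.Icc (0:ℝ) 1,
      annulusHypDensity r R (γ t) = π / (ρ t * m * Real.sin (π * v t)) := by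
    intro t ht
    have hρt : ‖γ t‖ = ρ t := rfl
    rw [annulusHypDensity, hρt, ← hmdef, mul_div_assoc π (Real.log (R / ρ t)) m]
  have hFeq : ∀ t ∈ Set.Icc (0:ℝ) 1,
      F t = π * ‖g t‖ / (ρ t * m * Real.sin (π * v t)) := by
    intro t ht
    rw [hFdef]; simp only
    rw [hdens t ht]; ring
  have hFcont : ContinuousOn F (Set.Icc (0:ℝ) 1) := by
    apply ContinuousOn.congr (f := fun t => π * ‖g t‖ / (ρ t * m * Real.sin (π * v t)))
      ?_ (fun t ht => hFeq t ht)
    apply ContinuousOn.div (continuousOn_const.mul hgc.norm)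
    · exact ((hρcont.mul continuousOn_const).mul
        (Real.continuous_sin.comp_continuousOn (continuousOn_const.mul hvcont)))
    · intro t ht
      have h1 := hρpos t ht
      have h2 := hspos t ht
      positivity
  -- pointwise bounds
  have hWb : ∀ t ∈ Set.Icc (0:ℝ) 1, |W t| ≤ ‖g t‖ / (ρ t * m) := by
    intro t ht
    have hρt := hρpos t ht
    rw [hWdef]; simp only
    rw [abs_div, abs_neg, abs_of_pos (by positivity : (0:ℝ) < ρ t ^ 2 * m)]
    rw [div_le_div_iff₀ (by positivity) (by positivity)]
    nlinarith [mul_le_mul_of_nonneg_right (he_bound t) (mul_pos hρt hm).le,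
      norm_nonneg (g t)]
  have hB1 : ∀ t ∈ Set.Icc (0:ℝ) 1, π * W t ≤ F t := by
    intro t ht
    have hρt := hρpos t ht
    have hst := hspos t ht
    have hs1 : Real.sin (π * v t) ≤ 1 := Real.sin_le_one _
    have hWt : W t ≤ ‖g t‖ / (ρ t * m) := (le_abs_self _).trans (hWb t ht)
    rw [hFeq t ht, le_div_iff₀ (by positivity)]
    have hgn : (0:ℝ) ≤ ‖g t‖ := norm_nonneg _
    have h3 : W t * (ρ t * m * Real.sin (π * v t)) ≤ ‖g t‖ * Real.sin (π * v t) := by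
      calc W t * (ρ t * m * Real.sin (π * v t))
          ≤ ‖g t‖ / (ρ t * m) * (ρ t * m * Real.sin (π * v t)) :=
            mul_le_mul_of_nonneg_right hWt (by positivity)
        _ = ‖g t‖ * Real.sin (π * v t) := by field_simp
    have h4 : ‖g t‖ * Real.sin (π * v t) ≤ ‖g t‖ := mul_le_of_le_one_right hgn hs1
    calc π * W t * (ρ t * m * Real.sin (π * v t))
        = π * (W t * (ρ t * m * Real.sin (π * v t))) := by ring
      _ ≤ π * ‖g t‖ := mul_le_mul_of_nonneg_left (h3.trans h4) Real.pi_pos.le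
  have hB2 : ∀ t ∈ Set.Icc (0:ℝ) 1, W t / v t ≤ F t := by
    intro t ht
    have hρt := hρpos t ht
    have hst := hspos t ht
    have hvt := (hv01 t ht).1
    have hsle : Real.sin (π * v t) ≤ π * v t := Real.sin_le (by positivity)
    have hWt : W t ≤ ‖g t‖ / (ρ t * m) := (le_abs_self _).trans (hWb t ht)
    rw [hFeq t ht, div_le_div_iff₀ hvt (by positivity)]
    have hgn : (0:ℝ) ≤ ‖g t‖ := norm_nonneg _
    have h3 : W t * (ρ t * m * Real.sin (π * v t)) ≤ ‖g t‖ * Real.sin (π * v t) := by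
      calc W t * (ρ t * m * Real.sin (π * v t))
          ≤ ‖g t‖ / (ρ t * m) * (ρ t * m * Real.sin (π * v t)) :=
            mul_le_mul_of_nonneg_right hWt (by positivity)
        _ = ‖g t‖ * Real.sin (π * v t) := by field_simp
    have h4 : ‖g t‖ * Real.sin (π * v t) ≤ ‖g t‖ * (π * v t) :=
      mul_le_mul_of_nonneg_left hsle hgn
    calc W t * (ρ t * m * Real.sin (π * v t)) ≤ ‖g t‖ * (π * v t) := h3.trans h4
      _ = π * ‖g t‖ * v t := by ring
  -- integrability
  have huIcc : Set.uIcc (0:ℝ) 1 = Set.Icc (0:ℝ) 1 := Set.uIcc_of_le zero_le_one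
  have hWint : IntervalIntegrable W volume 0 1 :=
    ContinuousOn.intervalIntegrable (by rw [huIcc]; exact hWcont)
  have hFint : IntervalIntegrable F volume 0 1 :=
    ContinuousOn.intervalIntegrable (by rw [huIcc]; exact hFcont)
  have hWvcont : ContinuousOn (fun t => W t / v t) (Set.Icc (0:ℝ) 1) :=
    hWcont.div hvcont (fun t ht => (hv01 t ht).1.ne')
  have hWvint : IntervalIntegrable (fun t => W t / v t) volume 0 1 :=
    ContinuousOn.intervalIntegrable (by rw [huIcc]; exact hWvcont)
  -- FTC
  have hI1 : ∫ t in (0:ℝ)..1, W t = τ - σ := by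
    rw [intervalIntegral.integral_eq_sub_of_hasDeriv_right_of_le zero_le_one hvcont
      (fun x hx => (hv' x hx).hasDerivWithinAt) hWint, hv1, hv0]
  have hlogvcont : ContinuousOn (fun t => Real.log (v t)) (Set.Icc (0:ℝ) 1) := by
    apply Real.continuousOn_log.comp hvcont
    intro t ht
    exact (hv01 t ht).1.ne'
  have hI2 : ∫ t in (0:ℝ)..1, W t / v t = Real.log τ - Real.log σ := by
    rw [intervalIntegral.integral_eq_sub_of_hasDeriv_right_of_le zero_le_one hlogvcont
      (fun x hx => (((Real.hasDerivAt_log (hv01 x (Set.Ioo_subset_Icc_self hx)).1.ne').comp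
        x (hv' x hx)).congr_deriv (by ring)).hasDerivWithinAt) hWvint, hv1, hv0]
  -- the integral of F equals the stated integral
  have hcong : (∫ t in (0:ℝ)..1, annulusHypDensity r R (γ t) * ‖deriv γ t‖)
      = ∫ t in (0:ℝ)..1, F t := by
    apply intervalIntegral.integral_congr_ae
    have h1 : ∀ᵐ x : ℝ ∂volume, x ≠ 1 := by
      rw [MeasureTheory.ae_iff]
      have : {x : ℝ | ¬ x ≠ 1} = {1} := by ext x; simp
      rw [this]
      exact Real.volume_singleton
    filter_upwards [h1] with x hx hxI
    rw [Set.uIoc_of_le zero_le_one] at hxI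
    have hxIoo : x ∈ Set.Ioo (0:ℝ) 1 := ⟨hxI.1, lt_of_le_of_ne hxI.2 hx⟩
    rw [hFdef]; simp only
    rw [(hdiff x hxIoo).deriv]
  rw [hcong]
  apply max_le
  · have h1 : ∫ t in (0:ℝ)..1, π * W t ≤ ∫ t in (0:ℝ)..1, F t :=
      intervalIntegral.integral_mono_on zero_le_one (hWint.const_mul π) hFint hB1
    rw [intervalIntegral.integral_const_mul, hI1] at h1
    linarith [h1]
  · have h2 : ∫ t in (0:ℝ)..1, W t / v t ≤ ∫ t in (0:ℝ)..1, F t :=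
      intervalIntegral.integral_mono_on zero_le_one hWvint hFint hB2
    rw [hI2] at h2
    rw [Real.log_div (by linarith : τ ≠ 0) hσ.ne']
    exact h2

lemma sin_min_le (σ τ s : ℝ) (hσ : 0 < σ) (hστ : σ ≤ τ) (hτ : τ < 1) (hs : s ∈ Set.Icc (0:ℝ) 1) :
    min (Real.sin (σ*π)) (Real.sin (τ*π)) ≤ Real.sin (π * (σ + (τ - σ) * s)) := by
  have hπ := Real.pi_pos
  rw [mul_comm σ π, mul_comm τ π]
  have key := strictConcaveOn_sin_Icc.concaveOn.2 (x := π * σ) (y := π * τ)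
    ⟨by nlinarith, by nlinarith⟩ ⟨by nlinarith, by nlinarith⟩
    (by linarith [hs.2] : (0:ℝ) ≤ 1 - s) hs.1 (by ring)
  have harg : (1 - s) • (π * σ) + s • (π * τ) = π * (σ + (τ - σ) * s) := by
    simp [smul_eq_mul]; ring
  rw [harg] at key
  calc min (Real.sin (π*σ)) (Real.sin (π*τ))
      = (1-s) * min (Real.sin (π*σ)) (Real.sin (π*τ)) + s * min (Real.sin (π*σ)) (Real.sin (π*τ)) := by ring
    _ ≤ (1-s) * Real.sin (π*σ) + s * Real.sin (π*τ) := by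
        apply add_le_add
        · exact mul_le_mul_of_nonneg_left (min_le_left _ _) (by linarith [hs.2])
        · exact mul_le_mul_of_nonneg_left (min_le_right _ _) hs.1
    _ ≤ Real.sin (π * (σ + (τ - σ) * s)) := by simpa [smul_eq_mul] using key

set_option maxHeartbeats 1000000 in
lemma annulus_upper_aux (r R : ℝ) (hr : 0 < r) (hrR : r < R) (σ τ : ℝ)
    (hσ : 0 < σ) (hστ : σ ≤ τ) (hτ : τ < 1) (z₁ z₂ : ℂ)
    (hz1 : z₁ ≠ 0) (hz2 : z₂ ≠ 0)
    (h₁ : Real.log (R / ‖z₁‖) = σ * Real.log (R / r))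
    (h₂ : Real.log (R / ‖z₂‖) = τ * Real.log (R / r))
    (φ ψ φd ψd : ℝ → ℝ)
    (hφ : ∀ t, HasDerivAt φ (φd t) t) (hψ : ∀ t, HasDerivAt ψ (ψd t) t)
    (hφdc : Continuous φd) (hψdc : Continuous ψd)
    (hφd0 : ∀ t, 0 ≤ φd t) (hψd0 : ∀ t, 0 ≤ ψd t)
    (hφ0 : φ 0 = 0) (hφ1 : φ 1 = 1) (hψ0 : ψ 0 = 0) (hψ1 : ψ 1 = 1)
    (hφr : ∀ t ∈ Set.Icc (0:ℝ) 1, 0 ≤ φ t ∧ φ t ≤ 1)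
    (hK0 : ∀ t ∈ Set.Icc (0:ℝ) 1, ψd t ≠ 0 →
      max (Real.sin (σ*π)) (Real.sin (τ*π)) ≤ Real.sin (π * (σ + (τ - σ) * φ t))) :
    ∃ γ : ℝ → ℂ, γ 0 = z₁ ∧ γ 1 = z₂ ∧
      (∀ t ∈ Set.Icc (0:ℝ) 1, γ t ∈ annulus r R) ∧
      ContDiffOn ℝ 1 γ (Set.Icc (0:ℝ) 1) ∧
      (∫ t in (0:ℝ)..1, annulusHypDensity r R (γ t) * ‖deriv γ t‖) ≤
        π ^ 2 / (max (Real.sin (σ * π)) (Real.sin (τ * π)) * Real.log (R / r)) +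
          (τ - σ) * π / min (Real.sin (σ * π)) (Real.sin (τ * π)) := by
  have hR : 0 < R := hr.trans hrR
  have hπ := Real.pi_pos
  have hm : 0 < Real.log (R / r) := Real.log_pos ((one_lt_div hr).2 hrR)
  set m := Real.log (R / r) with hmdef
  set K0 := max (Real.sin (σ*π)) (Real.sin (τ*π)) with hK0def
  set K1 := min (Real.sin (σ*π)) (Real.sin (τ*π)) with hK1def
  have hτpos : 0 < τ := lt_of_lt_of_le hσ hστ
  have hsinσ : 0 < Real.sin (σ*π) :=
    Real.sin_pos_of_pos_of_lt_pi (by positivity) (by nlinarith)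
  have hsinτ : 0 < Real.sin (τ*π) :=
    Real.sin_pos_of_pos_of_lt_pi (by positivity) (by nlinarith)
  have hK1pos : 0 < K1 := lt_min hsinσ hsinτ
  have hK0pos : 0 < K0 := lt_of_lt_of_le hK1pos min_le_max
  set θ := (z₂ / z₁).arg with hθdef
  have hθπ : |θ| ≤ π := Complex.abs_arg_le_pi _
  set a : ℝ → ℝ := fun t => -(m * (τ - σ) * φ t) with hadef
  set b : ℝ → ℝ := fun t => θ * ψ t with hbdef
  set γ : ℝ → ℂ := fun t => z₁ * Complex.exp (↑(a t) + ↑(b t) * Complex.I) with hγdef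
  set u : ℝ → ℝ := fun t => σ + (τ - σ) * φ t with hudef
  have hu01 : ∀ t ∈ Set.Icc (0:ℝ) 1, 0 < u t ∧ u t < 1 := by
    intro t ht
    have h1 := (hφr t ht).1
    have h2 := (hφr t ht).2
    constructor
    · rw [hudef]; simp only; nlinarith
    · rw [hudef]; simp only; nlinarith
  have hz1abs : 0 < ‖z₁‖ := by
    simpa using hz1
  have hz2abs : 0 < ‖z₂‖ := by
    simpa using hz2
  have habs : ∀ t, ‖γ t‖ = ‖z₁‖ * Real.exp (a t) := by
    intro t; rw [hγdef]; simp only [norm_mul, Complex.norm_exp]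
    congr 1; simp
  have hγabs : ∀ t, 0 < ‖γ t‖ := by
    intro t; rw [habs t]; positivity
  have h₁' : Real.log R - Real.log (‖z₁‖) = σ * m := by
    rw [← Real.log_div hR.ne' hz1abs.ne']; exact h₁
  have h₂' : Real.log R - Real.log (‖z₂‖) = τ * m := by
    rw [← Real.log_div hR.ne' hz2abs.ne']; exact h₂
  have hlogγ : ∀ t, Real.log (R / ‖γ t‖) = m * u t := by
    intro t
    rw [Real.log_div hR.ne' (hγabs t).ne', habs t,
      Real.log_mul hz1abs.ne' (Real.exp_pos _).ne', Real.log_exp]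
    rw [hadef, hudef]; simp only
    linear_combination h₁'
  have hmemA : ∀ t ∈ Set.Icc (0:ℝ) 1, γ t ∈ annulus r R := by
    intro t ht
    have hu := hu01 t ht
    have hlg : Real.log (‖γ t‖) = Real.log R - m * u t := by
      have h := hlogγ t
      rw [Real.log_div hR.ne' (hγabs t).ne'] at h
      linarith
    have hmrR : Real.log R - Real.log r = m := by
      rw [← Real.log_div hR.ne' hr.ne']
    constructor
    · have : Real.log r < Real.log (‖γ t‖) := by
        rw [hlg]
        nlinarith [hu.2]
      exact (Real.log_lt_log_iff hr (hγabs t)).1 this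
    · have : Real.log (‖γ t‖) < Real.log R := by
        rw [hlg]
        nlinarith [hu.1]
      exact (Real.log_lt_log_iff (hγabs t) hR).1 this
  have hγ0 : γ 0 = z₁ := by
    rw [hγdef]; simp [hadef, hbdef, hφ0, hψ0]
  have hγ1 : γ 1 = z₂ := by
    have hw : z₂ / z₁ ≠ 0 := div_ne_zero hz2 hz1
    have hwabs : (‖z₂ / z₁‖ : ℝ) = Real.exp (a 1) := by
      have hl : Real.log (‖z₂ / z₁‖) = a 1 := by
        rw [norm_div, Real.log_div hz2abs.ne' hz1abs.ne']
        simp only [hadef, hφ1]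
        linear_combination h₁' - h₂'
      rw [← hl, Real.exp_log (by rw [norm_div]; positivity)]
    rw [hγdef]; simp only [hadef, hbdef, hψ1, hφ1, mul_one]
    rw [Complex.exp_add]
    have : (Complex.exp (↑(-(m * (τ - σ))) : ℂ)) = ((Real.exp (-(m * (τ - σ))) : ℝ) : ℂ) := by
      rw [Complex.ofReal_exp]
    rw [this]
    have ha1 : a 1 = -(m * (τ - σ)) := by simp only [hadef, hφ1]; ring
    rw [← ha1, ← hwabs]
    rw [hθdef, Complex.norm_mul_exp_arg_mul_I (z₂ / z₁)]
    exact mul_div_cancel₀ z₂ hz1 ▸ (by field_simp)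
  -- derivative
  set ad : ℝ → ℝ := fun t => -(m * (τ - σ) * φd t) with haddef
  set bd : ℝ → ℝ := fun t => θ * ψd t with hbddef
  set D : ℝ → ℂ := fun t => γ t * (↑(ad t) + ↑(bd t) * Complex.I) with hDdef
  have hD : ∀ t, HasDerivAt γ (D t) t := by
    intro t
    have ha' : HasDerivAt a (ad t) t := by
      have := (hφ t).const_mul (-(m * (τ - σ)))
      apply HasDerivAt.congr_deriv (this.congr_of_eventuallyEq ?_) (by rw [haddef]; ring)
      filter_upwards with s
      rw [hadef]; ring
    have hb' : HasDerivAt b (bd t) t := by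
      have := (hψ t).const_mul θ
      exact this.congr_deriv (by rw [hbddef])
    have h2 : HasDerivAt (fun s => (↑(a s) + ↑(b s) * Complex.I : ℂ))
        (↑(ad t) + ↑(bd t) * Complex.I) t :=
      (ha'.ofReal_comp).add ((hb'.ofReal_comp).mul_const Complex.I)
    have h3 := (h2.cexp).const_mul z₁
    exact h3.congr_deriv (by rw [hDdef, hγdef]; ring)
  have hderiv : deriv γ = D := funext fun t => (hD t).deriv
  have hγcont : Continuous γ := by
    have : Differentiable ℝ γ := fun t => (hD t).differentiableAt
    exact this.continuous
  have hadc : Continuous ad := by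
    rw [haddef]
    exact (continuous_const.mul hφdc).neg
  have hbdc : Continuous bd := by
    rw [hbddef]; exact continuous_const.mul hψdc
  have hDcont : Continuous D := by
    rw [hDdef]
    exact hγcont.mul ((Complex.continuous_ofReal.comp hadc).add
      ((Complex.continuous_ofReal.comp hbdc).mul continuous_const))
  have hCD : ContDiffOn ℝ 1 γ (Set.Icc (0:ℝ) 1) := by
    apply ContDiff.contDiffOn
    rw [contDiff_one_iff_deriv]
    exact ⟨fun t => (hD t).differentiableAt, hderiv ▸ hDcont⟩
  have hφcont : Continuous φ := by
    have : Differentiable ℝ φ := fun t => (hφ t).differentiableAt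
    exact this.continuous
  have hucont : Continuous u := by
    rw [hudef]; exact continuous_const.add (continuous_const.mul hφcont)
  -- norm bound on D
  have hnorm : ∀ t, ‖D t‖ ≤ ‖γ t‖ * (m * (τ - σ) * φd t + |θ| * ψd t) := by
    intro t
    rw [hDdef]
    simp only [norm_mul]
    rw [show ‖γ t‖ = ‖γ t‖ from rfl]
    apply mul_le_mul_of_nonneg_left _ (norm_nonneg _)
    calc ‖(↑(ad t) + ↑(bd t) * Complex.I : ℂ)‖
        ≤ ‖(↑(ad t) : ℂ)‖ + ‖(↑(bd t) * Complex.I : ℂ)‖ := norm_add_le _ _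
      _ = |ad t| + |bd t| := by simp
      _ = m * (τ - σ) * φd t + |θ| * ψd t := by
          rw [haddef, hbddef]
          simp only
          rw [abs_neg, _root_.abs_of_nonneg
              (by nlinarith [mul_nonneg hπ.le (mul_nonneg (sub_nonneg.2 hστ) (hφd0 t)),
                mul_nonneg hm.le (mul_nonneg (sub_nonneg.2 hστ) (hφd0 t))] : (0:ℝ) ≤ m * (τ - σ) * φd t),
            abs_mul, _root_.abs_of_nonneg (hψd0 t)]
  -- the density along γ
  have hdens : ∀ t, annulusHypDensity r R (γ t) = π / (‖γ t‖ * m * Real.sin (π * u t)) := by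
    intro t
    rw [annulusHypDensity, hlogγ t, ← hmdef]
    have harg : π * (m * u t) / m = π * u t := by field_simp
    rw [harg]
  have hsinK1 : ∀ t ∈ Set.Icc (0:ℝ) 1, K1 ≤ Real.sin (π * u t) := by
    intro t ht
    rw [hK1def, hudef]
    exact sin_min_le σ τ (φ t) hσ hστ hτ ⟨(hφr t ht).1, (hφr t ht).2⟩
  have hsinpos : ∀ t ∈ Set.Icc (0:ℝ) 1, 0 < Real.sin (π * u t) :=
    fun t ht => lt_of_lt_of_le hK1pos (hsinK1 t ht)
  -- pointwise bound
  set H : ℝ → ℝ := fun t => π * (τ - σ) / K1 * φd t + π ^ 2 / (m * K0) * ψd t with hHdef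
  have hpoint : ∀ t ∈ Set.Icc (0:ℝ) 1,
      annulusHypDensity r R (γ t) * ‖deriv γ t‖ ≤ H t := by
    intro t ht
    have hγa := hγabs t
    have hs1 := hsinK1 t ht
    have hsp := hsinpos t ht
    have hdnn : 0 ≤ annulusHypDensity r R (γ t) := by
      rw [hdens t]; positivity
    rw [hderiv]
    calc annulusHypDensity r R (γ t) * ‖D t‖
        ≤ annulusHypDensity r R (γ t) * (‖γ t‖ * (m * (τ - σ) * φd t + |θ| * ψd t)) :=
          mul_le_mul_of_nonneg_left (hnorm t) hdnn
      _ = π * (τ - σ) * φd t / Real.sin (π * u t) + π * |θ| * ψd t / (m * Real.sin (π * u t)) := by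
          rw [hdens t]
          field_simp
      _ ≤ H t := by
          rw [hHdef]; simp only
          apply add_le_add
          · rw [show π * (τ - σ) / K1 * φd t = π * (τ - σ) * φd t / K1 by ring]
            have hnum : (0:ℝ) ≤ π * (τ - σ) * φd t := by
              nlinarith [mul_nonneg hπ.le (mul_nonneg (sub_nonneg.2 hστ) (hφd0 t))]
            gcongr
          · by_cases hz : ψd t = 0
            · simp [hz]
            · have hK0le : K0 ≤ Real.sin (π * u t) := by
                rw [hK0def, hudef]; exact hK0 t ht hz
              rw [show π ^ 2 / (m * K0) * ψd t = π ^ 2 * ψd t / (m * K0) by ring]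
              apply div_le_div₀ (mul_nonneg (by positivity) (hψd0 t))
              · nlinarith [mul_le_mul_of_nonneg_right
                  (mul_le_mul_of_nonneg_left hθπ hπ.le) (hψd0 t)]
              · positivity
              · exact mul_le_mul_of_nonneg_left hK0le hm.le
  -- integration
  have huIcc : Set.uIcc (0:ℝ) 1 = Set.Icc (0:ℝ) 1 := Set.uIcc_of_le zero_le_one
  have hφint : ∫ t in (0:ℝ)..1, φd t = 1 := by
    rw [intervalIntegral.integral_eq_sub_of_hasDerivAt (fun x _ => hφ x)
      (hφdc.intervalIntegrable 0 1), hφ1, hφ0, sub_zero]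
  have hψint : ∫ t in (0:ℝ)..1, ψd t = 1 := by
    rw [intervalIntegral.integral_eq_sub_of_hasDerivAt (fun x _ => hψ x)
      (hψdc.intervalIntegrable 0 1), hψ1, hψ0, sub_zero]
  have hHint : IntervalIntegrable H volume 0 1 := by
    rw [hHdef]
    exact ((continuous_const.mul hφdc).add (continuous_const.mul hψdc)).intervalIntegrable 0 1
  have hfcont : ContinuousOn (fun t => annulusHypDensity r R (γ t) * ‖deriv γ t‖)
      (Set.Icc (0:ℝ) 1) := by
    rw [hderiv]
    have hgcont : ContinuousOn (fun t => π / (‖γ t‖ * m * Real.sin (π * u t)))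
        (Set.Icc (0:ℝ) 1) := by
      apply ContinuousOn.div continuousOn_const
      · exact (((continuous_norm.comp hγcont).mul continuous_const).mul
          (Real.continuous_sin.comp (continuous_const.mul hucont))).continuousOn
      · intro t ht
        have := hγabs t
        have := hsinpos t ht
        positivity
    exact ContinuousOn.mul (hgcont.congr (fun t _ => hdens t)) hDcont.norm.continuousOn
  have hfint : IntervalIntegrable (fun t => annulusHypDensity r R (γ t) * ‖deriv γ t‖) volume 0 1 :=
    ContinuousOn.intervalIntegrable (by rw [huIcc]; exact hfcont)
  have hle : (∫ t in (0:ℝ)..1, annulusHypDensity r R (γ t) * ‖deriv γ t‖) ≤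
      ∫ t in (0:ℝ)..1, H t :=
    intervalIntegral.integral_mono_on zero_le_one hfint hHint hpoint
  have hHval : (∫ t in (0:ℝ)..1, H t) = π * (τ - σ) / K1 + π ^ 2 / (m * K0) := by
    simp only [hHdef]
    rw [intervalIntegral.integral_add (f := fun t => π * (τ - σ) / K1 * φd t)
      (g := fun t => π ^ 2 / (m * K0) * ψd t) ((continuous_const.mul hφdc).intervalIntegrable 0 1)
      ((continuous_const.mul hψdc).intervalIntegrable 0 1),
      intervalIntegral.integral_const_mul, intervalIntegral.integral_const_mul,
      hφint, hψint, mul_one, mul_one]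
  refine ⟨γ, hγ0, hγ1, hmemA, hCD, ?_⟩
  rw [hHval] at hle
  calc (∫ t in (0:ℝ)..1, annulusHypDensity r R (γ t) * ‖deriv γ t‖)
      ≤ π * (τ - σ) / K1 + π ^ 2 / (m * K0) := hle
    _ = π ^ 2 / (K0 * m) + (τ - σ) * π / K1 := by ring

/-- Hyperbolic distance bounds in an annulus for points at relative radial positions
`R/|z₁| = (R/r)^σ`, `R/|z₂| = (R/r)^τ` with `0 < σ ≤ τ < 1`:
`max ((τ−σ)π) (log (τ/σ)) ≤ d_A(z₁,z₂) ≤ π²/(K̂₀ mod A) + (τ−σ)π/K̂₁`, where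
`K̂₀ = max (sin (σπ)) (sin (τπ))` and `K̂₁ = min (sin (σπ)) (sin (τπ))`. -/
theorem annulusHypDist_bounds_of_exponents (r R : ℝ) (hr : 0 < r) (hrR : r < R)
    (z₁ z₂ : ℂ) (hz₁ : z₁ ∈ annulus r R) (hz₂ : z₂ ∈ annulus r R)
    (σ τ : ℝ) (hσ : 0 < σ) (hστ : σ ≤ τ) (hτ : τ < 1)
    (h₁ : R / ‖z₁‖ = (R / r) ^ σ)
    (h₂ : R / ‖z₂‖ = (R / r) ^ τ) :
    max ((τ - σ) * π) (Real.log (τ / σ)) ≤ annulusHypDist r R z₁ z₂ ∧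
      annulusHypDist r R z₁ z₂ ≤
        π ^ 2 / (max (Real.sin (σ * π)) (Real.sin (τ * π)) * Real.log (R / r)) +
          (τ - σ) * π / min (Real.sin (σ * π)) (Real.sin (τ * π)) := by
  have hR : 0 < R := hr.trans hrR
  have hRr : (0:ℝ) < R / r := by positivity
  have hlog₁ : Real.log (R / ‖z₁‖) = σ * Real.log (R / r) := by
    rw [h₁, Real.log_rpow hRr]
  have hlog₂ : Real.log (R / ‖z₂‖) = τ * Real.log (R / r) := by
    rw [h₂, Real.log_rpow hRr]
  have hz1ne : z₁ ≠ 0 := by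
    intro h
    have := hz₁.1
    rw [h] at this
    simp at this
    linarith
  have hz2ne : z₂ ≠ 0 := by
    intro h
    have := hz₂.1
    rw [h] at this
    simp at this
    linarith
  have hpath : ∃ γ : ℝ → ℂ, γ 0 = z₁ ∧ γ 1 = z₂ ∧
      (∀ t ∈ Set.Icc (0:ℝ) 1, γ t ∈ annulus r R) ∧
      ContDiffOn ℝ 1 γ (Set.Icc (0:ℝ) 1) ∧
      (∫ t in (0:ℝ)..1, annulusHypDensity r R (γ t) * ‖deriv γ t‖) ≤
        π ^ 2 / (max (Real.sin (σ * π)) (Real.sin (τ * π)) * Real.log (R / r)) +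
          (τ - σ) * π / min (Real.sin (σ * π)) (Real.sin (τ * π)) := by
    rcases le_total (Real.sin (τ * π)) (Real.sin (σ * π)) with hc | hc
    · -- circular move first, at the level of z₁
      apply annulus_upper_aux r R hr hrR σ τ hσ hστ hτ z₁ z₂ hz1ne hz2ne hlog₁ hlog₂
        (fun t => (max (2*t-1) 0)^2) (fun t => 1 - (max (1-2*t) 0)^2)
        (fun t => 4 * max (2*t-1) 0) (fun t => 4 * max (1-2*t) 0)
      · intro t
        have hin : HasDerivAt (fun t : ℝ => 2*t-1) 2 t := by
          simpa using ((hasDerivAt_id t).const_mul 2).sub_const 1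
        have := (hasDerivAt_maxsq (2*t-1)).comp t hin
        exact this.congr_deriv (by ring)
      · intro t
        have hin : HasDerivAt (fun t : ℝ => 1-2*t) (-2) t := by
          exact ((hasDerivAt_const t 1).sub ((hasDerivAt_id t).const_mul 2)).congr_deriv (by norm_num)
        have := (hasDerivAt_const t (1:ℝ)).sub ((hasDerivAt_maxsq (1-2*t)).comp t hin)
        exact this.congr_deriv (by ring)
      · exact continuous_const.mul (((continuous_const.mul continuous_id).sub
          continuous_const).max continuous_const)
      · exact continuous_const.mul ((continuous_const.sub
          (continuous_const.mul continuous_id)).max continuous_const)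
      · intro t; have := le_max_right (2*t-1) 0; nlinarith
      · intro t; have := le_max_right (1-2*t) 0; nlinarith
      · norm_num
      · norm_num
      · norm_num
      · norm_num
      · intro t ht
        constructor
        · positivity
        · have h1 : max (2*t-1) 0 ≤ 1 := by
            apply max_le _ zero_le_one
            nlinarith [ht.2]
          nlinarith [le_max_right (2*t-1) 0]
      · intro t ht hne
        have hmx : max (1-2*t) 0 ≠ 0 := by
          intro h; apply hne; rw [h]; ring
        have ht2 : 2*t-1 < 0 := by
          rcases le_or_gt (1-2*t) 0 with h | h
          · exact absurd (max_eq_right h) hmx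
          · linarith
        have hφt : (max (2*t-1) 0)^2 = 0 := by
          rw [max_eq_right ht2.le]; ring
        rw [hφt, max_eq_left hc, mul_zero, add_zero, mul_comm π σ]
    · -- radial move first, then circular at the level of z₂
      apply annulus_upper_aux r R hr hrR σ τ hσ hστ hτ z₁ z₂ hz1ne hz2ne hlog₁ hlog₂
        (fun t => 1 - (max (1-2*t) 0)^2) (fun t => (max (2*t-1) 0)^2)
        (fun t => 4 * max (1-2*t) 0) (fun t => 4 * max (2*t-1) 0)
      · intro t
        have hin : HasDerivAt (fun t : ℝ => 1-2*t) (-2) t := by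
          exact ((hasDerivAt_const t 1).sub ((hasDerivAt_id t).const_mul 2)).congr_deriv (by norm_num)
        have := (hasDerivAt_const t (1:ℝ)).sub ((hasDerivAt_maxsq (1-2*t)).comp t hin)
        exact this.congr_deriv (by ring)
      · intro t
        have hin : HasDerivAt (fun t : ℝ => 2*t-1) 2 t := by
          simpa using ((hasDerivAt_id t).const_mul 2).sub_const 1
        have := (hasDerivAt_maxsq (2*t-1)).comp t hin
        exact this.congr_deriv (by ring)
      · exact continuous_const.mul ((continuous_const.sub
          (continuous_const.mul continuous_id)).max continuous_const)
      · exact continuous_const.mul (((continuous_const.mul continuous_id).sub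
          continuous_const).max continuous_const)
      · intro t; have := le_max_right (1-2*t) 0; nlinarith
      · intro t; have := le_max_right (2*t-1) 0; nlinarith
      · norm_num
      · norm_num
      · norm_num
      · norm_num
      · intro t ht
        constructor
        · have h1 : max (1-2*t) 0 ≤ 1 := by
            apply max_le _ zero_le_one
            nlinarith [ht.1]
          nlinarith [le_max_right (1-2*t) 0]
        · nlinarith [le_max_right (1-2*t) 0, sq_nonneg (max (1-2*t) 0)]
      · intro t ht hne
        have hmx : max (2*t-1) 0 ≠ 0 := by
          intro h; apply hne; rw [h]; ring
        have ht2 : 1-2*t < 0 := by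
          rcases le_or_gt (2*t-1) 0 with h | h
          · exact absurd (max_eq_right h) hmx
          · linarith
        have hφt : 1 - (max (1-2*t) 0)^2 = 1 := by
          rw [max_eq_right ht2.le]; ring
        rw [hφt, max_eq_right hc, mul_one]
        have : σ + (τ - σ) = τ := by ring
        rw [this, mul_comm π τ]
  obtain ⟨γ, hγ0, hγ1, hmem, hCD, hlen⟩ := hpath
  have hlb : ∀ L ∈ { L : ℝ | ∃ γ : ℝ → ℂ, γ 0 = z₁ ∧ γ 1 = z₂ ∧
      (∀ t ∈ Set.Icc (0:ℝ) 1, γ t ∈ annulus r R) ∧ ContDiffOn ℝ 1 γ (Set.Icc (0:ℝ) 1) ∧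
      L = ∫ t in (0:ℝ)..1, annulusHypDensity r R (γ t) * ‖deriv γ t‖ },
      max ((τ - σ) * π) (Real.log (τ / σ)) ≤ L := by
    rintro L ⟨γ', e0, e1, emem, eC, rfl⟩
    exact annulus_length_lower r R hr hrR σ τ hσ hστ hτ z₁ z₂ hlog₁ hlog₂ γ' e0 e1 emem eC
  have hmemS : (∫ t in (0:ℝ)..1, annulusHypDensity r R (γ t) * ‖deriv γ t‖) ∈
      { L : ℝ | ∃ γ : ℝ → ℂ, γ 0 = z₁ ∧ γ 1 = z₂ ∧
      (∀ t ∈ Set.Icc (0:ℝ) 1, γ t ∈ annulus r R) ∧ ContDiffOn ℝ 1 γ (Set.Icc (0:ℝ) 1) ∧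
      L = ∫ t in (0:ℝ)..1, annulusHypDensity r R (γ t) * ‖deriv γ t‖ } :=
    ⟨γ, hγ0, hγ1, hmem, hCD, rfl⟩
  constructor
  · exact le_csInf ⟨_, hmemS⟩ hlb
  · exact (csInf_le ⟨_, fun L hL => hlb L hL⟩ hmemS).trans hlen
end

section
/- Let h be analytic on the annulus B = A(r,R) with 0 < r < R < ∞ and |h(z)| > 1 on B. Then for every ρ ∈ (r,R), log m̂(ρ,h) ≥ exp( −(π²/2) max{1/log(R/ρ), 1/log(ρ/r)} ) · log M(ρ,h), where m̂(ρ,h) = min{|h(z)| : |z| = ρ} and M(ρ,h) = max{|h(z)| : |z| = ρ}. -/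
open Real Complex

/-- The maximum modulus `M(ρ,h) = max {|h z| : |z| = ρ}`. -/
noncomputable def maxMod (h : ℂ → ℂ) (ρ : ℝ) : ℝ :=
  sSup ((fun z => ‖h z‖) '' Metric.sphere (0 : ℂ) ρ)

/-- The minimum modulus `m̂(ρ,h) = min {|h z| : |z| = ρ}`. -/
noncomputable def minMod (h : ℂ → ℂ) (ρ : ℝ) : ℝ :=
  sInf ((fun z => ‖h z‖) '' Metric.sphere (0 : ℂ) ρ)

/-!
Put `L = min (log (R / ρ)) (log (ρ / r))`. For `z₁` on the circle `|z| = ρ` the map `w ↦ z₁ eʷ`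
sends the strip `|Re w| < L` into the annulus, so `log |h (z₁ eʷ)|` is a positive harmonic function
there. Pulling it back to the unit disk by the conformal map `ζ ↦ (2L/π) i log ((1 + ζ) / (1 - ζ))`
onto the strip, Harnack's inequality `u ζ ≥ (1 - |ζ|) / (1 + |ζ|) u 0` becomes
`log |h (z₁ e^{it})| ≥ exp (-π |t| / (2L)) log |h z₁|`. Every point of the circle is `z₁ e^{it}`
with `|t| ≤ π`; take `|h z₁|` maximal and `|h (z₁ e^{it})|` minimal.
-/

open Metric Set InnerProductSpace

lemma one_sub_norm_div_one_add_norm_le_re {q : ℂ} (hq : ‖q‖ < 1) :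
    (1 - ‖q‖) / (1 + ‖q‖) ≤ ((1 + q) / (1 - q)).re := by
  have hsq : ‖q‖ ^ 2 = q.re ^ 2 + q.im ^ 2 := by rw [Complex.sq_norm, normSq_apply]; ring
  have hre : -‖q‖ ≤ q.re := (abs_le.1 (abs_re_le_norm q)).1
  have hden : 0 < (1 - q.re) ^ 2 + q.im ^ 2 := by
    have : q.re < 1 := (le_abs_self _).trans_lt ((abs_re_le_norm q).trans_lt hq)
    positivity
  rw [div_re, normSq_apply, ← add_div]
  simp only [add_re, add_im, sub_re, sub_im, one_re, one_im]
  rw [div_le_div_iff₀ (by linarith [norm_nonneg q]) (by nlinarith)]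
  nlinarith [mul_nonneg (sub_nonneg.2 hq.le) (neg_le_iff_add_nonneg.1 hre)]

lemma norm_sub_one_lt_norm_add_one {w : ℂ} (hw : 0 < w.re) : ‖w - 1‖ < ‖w + 1‖ := by
  rw [← sq_lt_sq₀ (norm_nonneg _) (norm_nonneg _), Complex.sq_norm, Complex.sq_norm,
    normSq_apply, normSq_apply]
  simp only [sub_re, sub_im, add_re, add_im, one_re, one_im]
  nlinarith

lemma one_sub_div_one_add_le_of_le {a b : ℝ} (ha : 0 ≤ a) (hab : a ≤ b) :
    (1 - b) / (1 + b) ≤ (1 - a) / (1 + a) := by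
  rw [div_le_div_iff₀ (by linarith) (by linarith)]
  nlinarith

-- The Cayley transform `(G - 1) / (G + 1)` maps the disk to itself and fixes `0`.
lemma harnack_re_of_apply_zero_eq_one {G : ℂ → ℂ}
    (hG : DifferentiableOn ℂ G (ball 0 1)) (hpos : ∀ w ∈ ball (0 : ℂ) 1, 0 < (G w).re)
    (hG0 : G 0 = 1) {z : ℂ} (hz : ‖z‖ < 1) :
    (1 - ‖z‖) / (1 + ‖z‖) ≤ (G z).re := by
  have hne : ∀ w ∈ ball (0 : ℂ) 1, G w + 1 ≠ 0 := fun w hw h0 => by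
    simpa [h0] using (norm_nonneg _).trans_lt (norm_sub_one_lt_norm_add_one (hpos w hw))
  set Φ : ℂ → ℂ := fun w => (G w - 1) / (G w + 1)
  have hΦ : DifferentiableOn ℂ Φ (ball 0 1) :=
    (hG.sub_const 1).div (hG.add_const 1) hne
  have hmaps : MapsTo Φ (ball 0 1) (closedBall 0 1) := fun w hw => by
    rw [mem_closedBall_zero_iff, norm_div,
      div_le_one ((norm_pos_iff.2 (hne w hw)))]
    exact (norm_sub_one_lt_norm_add_one (hpos w hw)).le
  have hzmem : z ∈ ball (0 : ℂ) 1 := mem_ball_zero_iff.2 hz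
  have hΦz : ‖Φ z‖ ≤ ‖z‖ := Complex.norm_le_norm_of_mapsTo_ball hΦ hmaps (by simp [Φ, hG0]) hz
  have hGz : G z = (1 + Φ z) / (1 - Φ z) := by
    have := hne z hzmem
    simp only [Φ]
    field_simp
    ring
  calc (1 - ‖z‖) / (1 + ‖z‖) ≤ (1 - ‖Φ z‖) / (1 + ‖Φ z‖) :=
        one_sub_div_one_add_le_of_le (norm_nonneg _) hΦz
    _ ≤ (G z).re := hGz ▸ one_sub_norm_div_one_add_norm_le_re (hΦz.trans_lt hz)

lemma harnack_of_harmonicOnNhd_ball {u : ℂ → ℝ} (hu : HarmonicOnNhd u (ball 0 1))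
    (hpos : ∀ w ∈ ball (0 : ℂ) 1, 0 < u w) {z : ℂ} (hz : ‖z‖ < 1) :
    (1 - ‖z‖) / (1 + ‖z‖) * u 0 ≤ u z := by
  obtain ⟨F, hF, hFu⟩ := hu.exists_analyticOnNhd_ball_re_eq
  have h0 : (0 : ℂ) ∈ ball (0 : ℂ) 1 := mem_ball_self one_pos
  have hu0 := hpos 0 h0
  set G : ℂ → ℂ := fun w => (F w - (F 0).im * I) / (u 0 : ℂ)
  have hGre : ∀ w ∈ ball (0 : ℂ) 1, (G w).re = u w / u 0 := fun w hw => by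
    simp [G, div_ofReal_re, ← hFu hw]
  have hG0 : G 0 = 1 := by
    have : F 0 - (F 0).im * I = u 0 := by
      rw [← hFu h0]
      apply Complex.ext <;> simp
    simp [G, this, ofReal_ne_zero.2 hu0.ne']
  have hGd : DifferentiableOn ℂ G (ball 0 1) :=
    (hF.differentiableOn.sub_const _).div_const _
  have := harnack_re_of_apply_zero_eq_one hGd
    (fun w hw => by rw [hGre w hw]; exact div_pos (hpos w hw) hu0) hG0 hz
  rwa [hGre z (mem_ball_zero_iff.2 hz), le_div_iff₀ hu0] at this

lemma re_one_add_div_one_sub_pos {ζ : ℂ} (hζ : ‖ζ‖ < 1) : 0 < ((1 + ζ) / (1 - ζ)).re :=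
  (div_pos (by linarith) (by linarith [norm_nonneg ζ])).trans_le
    (one_sub_norm_div_one_add_norm_le_re hζ)

noncomputable def stripMap (L : ℝ) (ζ : ℂ) : ℂ := 2 * L / π * I * log ((1 + ζ) / (1 - ζ))

lemma stripMap_zero (L : ℝ) : stripMap L 0 = 0 := by simp [stripMap]

lemma differentiableAt_stripMap (L : ℝ) {ζ : ℂ} (hζ : ‖ζ‖ < 1) :
    DifferentiableAt ℂ (stripMap L) ζ :=
  ((differentiableAt_id.const_add 1).div (differentiableAt_id.const_sub 1)
    (sub_ne_zero.2 fun h => by simp [← h] at hζ)).clog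
    (mem_slitPlane_iff.2 (Or.inl (re_one_add_div_one_sub_pos hζ))) |>.const_mul _

lemma abs_re_stripMap_lt {L : ℝ} (hL : 0 < L) {ζ : ℂ} (hζ : ‖ζ‖ < 1) :
    |(stripMap L ζ).re| < L := by
  have harg := abs_arg_lt_pi_div_two_iff.2 (Or.inl (re_one_add_div_one_sub_pos hζ))
  have hre : (stripMap L ζ).re = -(2 * L / π) * arg ((1 + ζ) / (1 - ζ)) := by
    simp [stripMap, log_im, mul_re, mul_im]
  rw [hre, abs_mul, abs_neg, abs_of_pos (by positivity)]
  calc 2 * L / π * |arg ((1 + ζ) / (1 - ζ))| < 2 * L / π * (π / 2) := by gcongr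
    _ = L := by field_simp

lemma stripMap_ofReal (L : ℝ) {x : ℝ} (hx : x ∈ Ioo (-1) 1) :
    stripMap L x = (2 * L / π * Real.log ((1 + x) / (1 - x)) : ℝ) * I := by
  have hpos : 0 < (1 + x) / (1 - x) := div_pos (by linarith [hx.1]) (by linarith [hx.2])
  rw [stripMap, ofReal_mul, ofReal_log hpos.le]
  push_cast
  ring

lemma exists_log_one_add_div_one_sub_eq (ℓ : ℝ) :
    ∃ x ∈ Ioo (-1 : ℝ) 1, Real.log ((1 + x) / (1 - x)) = ℓ := by
  refine ⟨tanh (ℓ / 2), ⟨neg_one_lt_tanh _, tanh_lt_one _⟩, ?_⟩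
  have := artanh_eq_half_log ⟨(neg_one_lt_tanh (ℓ / 2)).le, (tanh_lt_one (ℓ / 2)).le⟩
  rw [artanh_tanh] at this
  linarith

lemma one_sub_abs_div_one_add_abs_eq {x : ℝ} (hx : x ∈ Ioo (-1 : ℝ) 1) :
    (1 - |x|) / (1 + |x|) = Real.exp (-|Real.log ((1 + x) / (1 - x))|) := by
  obtain ⟨h₁, h₂⟩ := hx
  have hpos : 0 < (1 + x) / (1 - x) := div_pos (by linarith) (by linarith)
  rcases le_total 0 x with hx0 | hx0
  · have hlog : 0 ≤ Real.log ((1 + x) / (1 - x)) :=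
      Real.log_nonneg ((one_le_div (by linarith)).2 (by linarith))
    rw [abs_of_nonneg hx0, abs_of_nonneg hlog, Real.exp_neg, Real.exp_log hpos, inv_div]
  · have hlog : Real.log ((1 + x) / (1 - x)) ≤ 0 :=
      Real.log_nonpos hpos.le ((div_le_one (by linarith)).2 (by linarith))
    rw [abs_of_nonpos hx0, abs_of_nonpos hlog, neg_neg, Real.exp_log hpos, sub_neg_eq_add,
      ← sub_eq_add_neg]

lemma harnack_log_norm_strip {L : ℝ} (hL : 0 < L) {G : ℂ → ℂ}
    (hG : DifferentiableOn ℂ G {w | |w.re| < L}) (hG1 : ∀ w : ℂ, |w.re| < L → 1 < ‖G w‖)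
    (t : ℝ) :
    Real.exp (-(π * |t| / (2 * L))) * Real.log ‖G 0‖ ≤ Real.log ‖G (t * I)‖ := by
  have hmem : ∀ ζ ∈ ball (0 : ℂ) 1, |(stripMap L ζ).re| < L := fun ζ hζ =>
    abs_re_stripMap_lt hL (mem_ball_zero_iff.1 hζ)
  have hstrip : IsOpen {w : ℂ | |w.re| < L} := isOpen_lt continuous_re.abs continuous_const
  have hΦ : AnalyticOnNhd ℂ (G ∘ stripMap L) (ball 0 1) := by
    refine DifferentiableOn.analyticOnNhd (fun ζ hζ => ?_) isOpen_ball
    exact ((hG.differentiableAt (hstrip.mem_nhds (hmem ζ hζ))).comp ζ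
      (differentiableAt_stripMap L (mem_ball_zero_iff.1 hζ))).differentiableWithinAt
  obtain ⟨x, hx, hxt⟩ := exists_log_one_add_div_one_sub_eq (π * t / (2 * L))
  have hxI : stripMap L x = t * I := by
    rw [stripMap_ofReal L hx, hxt]
    congr 2
    field_simp
  have := harnack_of_harmonicOnNhd_ball (u := fun ζ => Real.log ‖G (stripMap L ζ)‖)
    (fun ζ hζ => (hΦ ζ hζ).harmonicAt_log_norm
      (norm_pos_iff.1 (one_pos.trans (hG1 _ (hmem ζ hζ)))))
    (fun ζ hζ => Real.log_pos (hG1 _ (hmem ζ hζ)))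
    (z := x) (by simpa [abs_lt] using hx)
  rwa [norm_real, Real.norm_eq_abs, one_sub_abs_div_one_add_abs_eq hx, hxt, abs_div, abs_mul,
    abs_of_pos pi_pos, abs_of_pos (by positivity : (0:ℝ) < 2 * L), stripMap_zero, hxI] at this

lemma isOpen_annulus (r R : ℝ) : IsOpen (annulus r R) :=
  isOpen_Ioo.preimage continuous_norm

lemma mul_exp_mem_annulus {r R ρ L : ℝ} (hr : 0 < r) (hρ : 0 < ρ) (hR : 0 < R)
    (hLR : L ≤ Real.log (R / ρ)) (hLr : L ≤ Real.log (ρ / r)) {z w : ℂ} (hz : ‖z‖ = ρ)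
    (hw : |w.re| < L) : z * cexp w ∈ annulus r R := by
  obtain ⟨hw₁, hw₂⟩ := abs_lt.1 hw
  rw [annulus, mem_ofPred_eq, norm_mul, norm_exp, hz]
  constructor
  · calc r = ρ * Real.exp (-Real.log (ρ / r)) := by
          rw [Real.exp_neg, Real.exp_log (div_pos hρ hr)]; field_simp
      _ < ρ * Real.exp w.re := by gcongr; linarith
  · calc ρ * Real.exp w.re < ρ * Real.exp (Real.log (R / ρ)) := by gcongr; linarith
      _ = R := by rw [Real.exp_log (div_pos hR hρ)]; field_simp

lemma one_div_min_eq_max_one_div {a b : ℝ} (ha : 0 < a) (hb : 0 < b) :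
    1 / min a b = max (1 / a) (1 / b) := by
  rcases le_total a b with hab | hab
  · rw [min_eq_left hab, max_eq_left (one_div_le_one_div_of_le ha hab)]
  · rw [min_eq_right hab, max_eq_right (one_div_le_one_div_of_le hb hab)]

lemma exp_mul_log_norm_le_log_norm_of_norm_eq {r R ρ : ℝ} (hr : 0 < r) (hρ₁ : r < ρ)
    (hρ₂ : ρ < R) {h : ℂ → ℂ} (hh : DifferentiableOn ℂ h (annulus r R))
    (hbig : ∀ z ∈ annulus r R, 1 < ‖h z‖) {z₁ z₂ : ℂ} (h₁ : ‖z₁‖ = ρ) (h₂ : ‖z₂‖ = ρ) :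
    Real.exp (-(π ^ 2 / 2) * max (1 / Real.log (R / ρ)) (1 / Real.log (ρ / r))) *
      Real.log ‖h z₁‖ ≤ Real.log ‖h z₂‖ := by
  have hρ : 0 < ρ := hr.trans hρ₁
  have hLR : 0 < Real.log (R / ρ) := Real.log_pos ((one_lt_div hρ).2 hρ₂)
  have hLr : 0 < Real.log (ρ / r) := Real.log_pos ((one_lt_div hr).2 hρ₁)
  set L := min (Real.log (R / ρ)) (Real.log (ρ / r))
  have hL : 0 < L := lt_min hLR hLr
  have hmem : ∀ w : ℂ, |w.re| < L → z₁ * cexp w ∈ annulus r R := fun w hw =>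
    mul_exp_mem_annulus hr hρ (hρ.trans hρ₂) (min_le_left _ _) (min_le_right _ _) h₁ hw
  have hG : DifferentiableOn ℂ (fun w => h (z₁ * cexp w)) {w | |w.re| < L} := fun w hw =>
    ((hh.differentiableAt ((isOpen_annulus r R).mem_nhds (hmem w hw))).comp w
      (Complex.differentiableAt_exp.const_mul z₁)).differentiableWithinAt
  have hz₁ : z₁ ≠ 0 := norm_pos_iff.1 (h₁ ▸ hρ)
  set t := arg (z₂ / z₁)
  have hz₂ : z₁ * cexp (t * I) = z₂ := by
    have := norm_mul_exp_arg_mul_I (z₂ / z₁)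
    rw [norm_div, h₁, h₂, div_self hρ.ne', ofReal_one, one_mul] at this
    rw [this]
    field_simp
  have hharnack := harnack_log_norm_strip hL hG (fun w hw => hbig _ (hmem w hw)) t
  rw [Complex.exp_zero, mul_one, hz₂] at hharnack
  refine le_trans (mul_le_mul_of_nonneg_right (Real.exp_le_exp.2 ?_)
    (Real.log_nonneg (hbig z₁ ⟨h₁ ▸ hρ₁, h₁ ▸ hρ₂⟩).le)) hharnack
  rw [← one_div_min_eq_max_one_div hLR hLr, neg_mul, neg_le_neg_iff]
  have : |t| ≤ π := abs_arg_le_pi _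
  calc π * |t| / (2 * L) ≤ π * π / (2 * L) := by gcongr
    _ = π ^ 2 / 2 * (1 / L) := by ring

lemma exists_norm_eq_maxMod {h : ℂ → ℂ} {ρ : ℝ} (hρ : 0 ≤ ρ)
    (hh : ContinuousOn h (sphere 0 ρ)) : ∃ z ∈ sphere (0 : ℂ) ρ, ‖h z‖ = maxMod h ρ :=
  ((isCompact_sphere 0 ρ).image_of_continuousOn (continuous_norm.comp_continuousOn hh)).sSup_mem
    ((NormedSpace.sphere_nonempty.2 hρ).image _)

lemma exists_norm_eq_minMod {h : ℂ → ℂ} {ρ : ℝ} (hρ : 0 ≤ ρ)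
    (hh : ContinuousOn h (sphere 0 ρ)) : ∃ z ∈ sphere (0 : ℂ) ρ, ‖h z‖ = minMod h ρ :=
  ((isCompact_sphere 0 ρ).image_of_continuousOn (continuous_norm.comp_continuousOn hh)).sInf_mem
    ((NormedSpace.sphere_nonempty.2 hρ).image _)

theorem log_minMod_ge_general (r R : ℝ) (hr : 0 < r)
    (h : ℂ → ℂ) (hh : AnalyticOn ℂ h (annulus r R))
    (hbig : ∀ z ∈ annulus r R, 1 < ‖h z‖)
    (ρ : ℝ) (hρ₁ : r < ρ) (hρ₂ : ρ < R) :
    Real.log (minMod h ρ) ≥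
      Real.exp (-(π ^ 2 / 2) *
          max (1 / Real.log (R / ρ)) (1 / Real.log (ρ / r))) *
        Real.log (maxMod h ρ) := by
  have hsphere : sphere (0 : ℂ) ρ ⊆ annulus r R := fun z hz => by
    rw [mem_sphere_zero_iff_norm] at hz
    exact ⟨hz ▸ hρ₁, hz ▸ hρ₂⟩
  have hcont : ContinuousOn h (sphere 0 ρ) := hh.continuousOn.mono hsphere
  obtain ⟨z₁, hz₁, hmax⟩ := exists_norm_eq_maxMod (hr.trans hρ₁).le hcont
  obtain ⟨z₂, hz₂, hmin⟩ := exists_norm_eq_minMod (hr.trans hρ₁).le hcont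
  rw [← hmax, ← hmin]
  exact exp_mul_log_norm_le_log_norm_of_norm_eq hr hρ₁ hρ₂ hh.differentiableOn hbig
    (mem_sphere_zero_iff_norm.1 hz₁) (mem_sphere_zero_iff_norm.1 hz₂)

/-- **Minimum modulus lemma (Zheng).** If `h` is analytic on the annulus `B = A(r,R)` with
`0 < r < R < ∞` and `|h| > 1` on `B`, then for every `ρ ∈ (r,R)`,
`log m̂(ρ,h) ≥ exp (−(π²/2) max (1/log(R/ρ)) (1/log(ρ/r))) · log M(ρ,h)`. -/
theorem log_minMod_ge (r R : ℝ) (hr : 0 < r) (hrR : r < R)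
    (h : ℂ → ℂ) (hh : AnalyticOn ℂ h (annulus r R))
    (hbig : ∀ z ∈ annulus r R, 1 < ‖h z‖)
    (ρ : ℝ) (hρ₁ : r < ρ) (hρ₂ : ρ < R) :
    Real.log (minMod h ρ) ≥
      Real.exp (-(π ^ 2 / 2) *
          max (1 / Real.log (R / ρ)) (1 / Real.log (ρ / r))) *
        Real.log (maxMod h ρ) :=
  log_minMod_ge_general r R hr h hh hbig ρ hρ₁ hρ₂
end

section
/- Let T : [r₀,∞) → (0,∞) be increasing with T(r)/log r increasing and T(r)/log r → ∞ as r → ∞, and suppose T(R) ≥ (log R/log r)·T(r) for all r₀ ≤ r < R. Define T̂(r) = e^{T(r)} and T̂_n the n-th iterate of T̂. Then for all r₀ ≤ r < R (with T̂(r₀) > r₀) and every positive integer n, T̂_n(R) ≥ T̂_n(r)^{log R / log r}. -/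
open Real

/-- **Abstract iteration lemma** (Lemma 2.4(3)). Let `T` be positive and increasing on
`[r₀,∞)` with `T(r)/log r` increasing and tending to `∞`, and suppose
`T(R) ≥ (log R / log r) T(r)` for `r₀ ≤ r < R`. Let `T̂(r) = exp (T r)` and suppose
`T̂(r₀) > r₀`. Then for all `r₀ ≤ r < R` and every positive integer `n`,
`T̂_n(R) ≥ T̂_n(r) ^ (log R / log r)`, where `T̂_n` is the `n`-th iterate of `T̂`. -/
theorem iterate_exp_char_ge_rpow (T : ℝ → ℝ) (r₀ : ℝ) (hr₀ : 1 < r₀)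
    (hpos : ∀ r, r₀ ≤ r → 0 < T r)
    (hmono : MonotoneOn T (Set.Ici r₀))
    (hquot_mono : MonotoneOn (fun r => T r / Real.log r) (Set.Ici r₀))
    (hquot_tendsto :
      Filter.Tendsto (fun r => T r / Real.log r) Filter.atTop Filter.atTop)
    (hconvex : ∀ r R : ℝ, r₀ ≤ r → r < R → T R ≥ Real.log R / Real.log r * T r)
    (hfix : Real.exp (T r₀) > r₀) :
    ∀ r R : ℝ, r₀ ≤ r → r < R → ∀ n : ℕ, 1 ≤ n →
      (fun s => Real.exp (T s))^[n] R ≥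
        ((fun s => Real.exp (T s))^[n] r) ^ (Real.log R / Real.log r) := by
  set f : ℝ → ℝ := fun s => Real.exp (T s) with hf
  have hfmono : ∀ a b : ℝ, r₀ ≤ a → a ≤ b → f a ≤ f b := fun a b ha hab =>
    Real.exp_le_exp.mpr (hmono ha (ha.trans hab) hab)
  have hiter : ∀ (n : ℕ) (s : ℝ), r₀ ≤ s → r₀ ≤ f^[n] s := by
    intro n
    induction n with
    | zero => intro s hs; simpa using hs
    | succ k ih =>
      intro s hs
      rw [Function.iterate_succ_apply']
      exact le_of_lt (lt_of_lt_of_le hfix (hfmono r₀ _ le_rfl (ih s hs)))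
  intro r R hr hrR n hn
  have hr1 : 1 < r := hr₀.trans_le hr
  have hlogr : 0 < Real.log r := Real.log_pos hr1
  set L : ℝ := Real.log R / Real.log r with hLdef
  have hL : 1 < L := by
    rw [hLdef, lt_div_iff₀ hlogr, one_mul]
    exact Real.log_lt_log (lt_trans one_pos hr1) hrR
  -- key: for a ≥ r₀, f (a^L) ≥ (f a)^L
  have hkey : ∀ a : ℝ, r₀ ≤ a → (f a) ^ L ≤ f (a ^ L) := by
    intro a ha
    have ha1 : 1 < a := hr₀.trans_le ha
    have ha0 : 0 < a := lt_trans one_pos ha1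
    have haL : a < a ^ L := by
      calc a = a ^ (1 : ℝ) := (Real.rpow_one a).symm
        _ < a ^ L := Real.rpow_lt_rpow_of_exponent_lt ha1 hL
    have hc := hconvex a (a ^ L) ha haL
    rw [Real.log_rpow ha0] at hc
    have hla : Real.log a ≠ 0 := ne_of_gt (Real.log_pos ha1)
    rw [mul_div_assoc, div_self hla, mul_one] at hc
    have : (f a) ^ L = Real.exp (L * T a) := by
      rw [hf]
      rw [Real.rpow_def_of_pos (Real.exp_pos _), Real.log_exp, mul_comm]
    rw [this]
    exact Real.exp_le_exp.mpr hc
  induction n with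
  | zero => omega
  | succ k ih =>
    rcases Nat.eq_zero_or_pos k with hk | hk
    · subst hk
      simp only [Function.iterate_succ_apply', Function.iterate_zero_apply]
      have hc := hconvex r R hr hrR
      have : (f r) ^ L = Real.exp (L * T r) := by
        rw [hf, Real.rpow_def_of_pos (Real.exp_pos _), Real.log_exp, mul_comm]
      rw [this]
      exact Real.exp_le_exp.mpr hc
    · have ihk := ih hk
      rw [Function.iterate_succ_apply', Function.iterate_succ_apply']
      have h1 : r₀ ≤ f^[k] r := hiter k r hr
      have h2 : f^[k] r ≤ (f^[k] r) ^ L := by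
        have ha1 : 1 < f^[k] r := hr₀.trans_le h1
        calc f^[k] r = (f^[k] r) ^ (1 : ℝ) := (Real.rpow_one _).symm
          _ ≤ (f^[k] r) ^ L := le_of_lt (Real.rpow_lt_rpow_of_exponent_lt ha1 hL)
      calc (f (f^[k] r)) ^ L ≤ f ((f^[k] r) ^ L) := hkey _ h1
        _ ≤ f (f^[k] R) := hfmono _ _ (h1.trans h2) ihk
end
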